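/- arXiv:1811.07610 — 8 statements merged into one kernel-verified Lean document; each statement's English description precedes it below -/
import Mathlib

section
/- Let n ≥ 2 and let w_0, w_1, …, w_l be a symmetric filter of length l (0 < l ≤ ⌊(n−1)/2⌋), with w_k = 0 for k > l. Let W^R = T + H^R ∈ ℝ^{n×n}, where [T]_{i,j} = w_{|i−j|} and [H^R]_{i,j} = w_{i+j−1} + w_{2n+1−i−j} (indices 1 ≤ i,j ≤ n). Then for every i ∈ {1,…,n}, the vector q_i with entries (q_i)_j = cos((i−1)(2j−1)π/(2n)) satisfies W^R q_i = λ_i^R q_i, where λ_i^R = w_0 + 2∑_{j=1}^{l} w_j cos(j(i−1)π/n). -/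
/-!
Extend `q_i` to the sequence `x m = cos (θ / 2 + m θ)` on `ℤ`, with `θ = (i - 1) π / n`. It is
even about `-1/2` and, since `n θ ∈ π ℤ`, also about `n - 1/2`. For such a doubly symmetric
sequence the two Hankel terms of `W^R` are exactly the parts of the infinite convolution
`∑_k w_{|k|} x_{r-k}` that fall outside `0, …, n - 1`, folded back in; so row `r` of `W^R q_i`
is that convolution. Pairing `k` with `-k` and `cos (α - kθ) + cos (α + kθ) = 2 cos (kθ) cos α`
shows the convolution is `λ_i^R x_r`.
-/

open Finset Real

theorem Finset.sum_Ico_neg_two_mul_eq_sum_range {M : Type*} [AddCommMonoid M] (f : ℤ → M)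
    (n : ℕ) :
    ∑ m ∈ Ico (-(n : ℤ)) (2 * n), f m
      = ∑ j ∈ range n, (f j + f (-1 - j) + f (2 * n - 1 - j)) := by
  have hmid : ∑ j ∈ range n, f j = ∑ m ∈ Ico 0 (n : ℤ), f m := by
    refine sum_nbij' (fun j => j) Int.toNat ?_ ?_ ?_ ?_ fun _ _ => rfl <;>
      intro j hj <;> simp only [mem_range, mem_Ico] at hj ⊢ <;> omega
  have hlow : ∑ j ∈ range n, f (-1 - j) = ∑ m ∈ Ico (-(n : ℤ)) 0, f m := by
    refine sum_nbij' (fun j => -1 - j) (fun m => (-1 - m).toNat) ?_ ?_ ?_ ?_ fun _ _ => rfl <;>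
      intro j hj <;> simp only [mem_range, mem_Ico] at hj ⊢ <;> omega
  have hhigh : ∑ j ∈ range n, f (2 * n - 1 - j) = ∑ m ∈ Ico (n : ℤ) (2 * n), f m := by
    refine sum_nbij' (fun j => 2 * n - 1 - j) (fun m => (2 * n - 1 - m).toNat) ?_ ?_ ?_ ?_
      fun _ _ => rfl <;>
      intro j hj <;> simp only [mem_range, mem_Ico] at hj ⊢ <;> omega
  rw [sum_add_distrib, sum_add_distrib, hmid, hlow, hhigh, add_comm (∑ m ∈ Ico 0 _, f m),
    ← sum_union (Ico_disjoint_Ico_consecutive _ _ _), Ico_union_Ico_eq_Ico (by omega) (by omega),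
    ← sum_union (Ico_disjoint_Ico_consecutive _ _ _), Ico_union_Ico_eq_Ico (by omega) (by omega)]

theorem Finset.sum_Icc_neg_self_eq {M : Type*} [AddCommGroup M] (g : ℤ → M) (l : ℕ) :
    ∑ k ∈ Icc (-(l : ℤ)) l, g k = g 0 + ∑ k ∈ Icc 1 l, (g k + g (-k)) := by
  induction l with
  | zero => simp
  | succ l ih =>
    push_cast
    rw [sum_Icc_succ_eq_add_endpoints, ih, sum_Icc_succ_top (by omega)]
    push_cast
    abel

theorem sum_reflective_row_eq_finsum {R : Type*} [Semiring R] {n : ℕ} {w : ℕ → R}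
    (hw : ∀ k, n < k → w k = 0) {x : ℤ → R} (hx_left : ∀ m, x (-1 - m) = x m)
    (hx_right : ∀ m, x (2 * n - 1 - m) = x m) (r : Fin n) :
    ∑ j : Fin n, (w ((r : ℤ) - (j : ℤ)).natAbs + (w (r + j + 1) + w (2 * n - 1 - r - j)))
        * x (j : ℕ)
      = ∑ᶠ k : ℤ, w k.natAbs * x (r - k) := by
  have hsupp : (Function.support fun m : ℤ => w ((r : ℤ) - m).natAbs * x m)
      ⊆ Ico (-(n : ℤ)) (2 * n) := by
    intro m hm
    by_contra hout
    simp only [coe_Ico, Set.mem_Ico, not_and_or, not_le, not_lt] at hout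
    have hr := r.isLt
    exact hm (by dsimp only; rw [hw _ (by omega), zero_mul])
  calc _ = ∑ m ∈ Ico (-(n : ℤ)) (2 * n), w ((r : ℤ) - m).natAbs * x m := by
        rw [sum_Ico_neg_two_mul_eq_sum_range, ← Fin.sum_univ_eq_sum_range]
        refine sum_congr rfl fun j _ => ?_
        have hj := j.isLt
        have hr := r.isLt
        rw [hx_left, hx_right, show ((r : ℤ) - (-1 - j)).natAbs = r + j + 1 by omega,
          show ((r : ℤ) - (2 * n - 1 - j)).natAbs = 2 * n - 1 - r - j by omega, add_mul, add_mul,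
          ← add_assoc]
    _ = ∑ᶠ m, w ((r : ℤ) - m).natAbs * x m := (finsum_eq_sum_of_support_subset _ hsupp).symm
    _ = ∑ᶠ k : ℤ, w k.natAbs * x (r - k) := by
        rw [← finsum_comp_equiv (Equiv.subLeft (r : ℤ))]
        simp only [Equiv.subLeft_apply, sub_sub_cancel]

theorem finsum_mul_cos_sub_eq {w : ℕ → ℝ} {l : ℕ} (hw : ∀ k, l < k → w k = 0)
    (β θ : ℝ) (r : ℤ) :
    ∑ᶠ k : ℤ, w k.natAbs * cos (β + ((r - k : ℤ) : ℝ) * θ)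
      = (w 0 + 2 * ∑ k ∈ Icc 1 l, w k * cos (k * θ)) * cos (β + r * θ) := by
  have hsupp : (Function.support fun k : ℤ => w k.natAbs * cos (β + ((r - k : ℤ) : ℝ) * θ))
      ⊆ Icc (-(l : ℤ)) l := by
    intro k hk
    by_contra hout
    simp only [coe_Icc, Set.mem_Icc, not_and_or, not_le] at hout
    exact hk (by dsimp only; rw [hw _ (by omega), zero_mul])
  have hpair (k : ℕ) : cos (β + ((r - k : ℤ) : ℝ) * θ) + cos (β + ((r - -(k : ℤ) : ℤ) : ℝ) * θ)
      = 2 * cos (k * θ) * cos (β + r * θ) := by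
    rw [show β + ((r - k : ℤ) : ℝ) * θ = (β + r * θ) - k * θ by push_cast; ring,
      show β + ((r - -(k : ℤ) : ℤ) : ℝ) * θ = (β + r * θ) + k * θ by push_cast; ring,
      cos_sub, cos_add (β + r * θ)]
    ring
  rw [finsum_eq_sum_of_support_subset _ hsupp, sum_Icc_neg_self_eq, mul_sum, add_mul, sum_mul]
  congr 1
  · simp
  · refine sum_congr rfl fun k _ => ?_
    rw [Int.natAbs_neg, Int.natAbs_natCast, ← mul_add, hpair]
    ring

theorem Real.cos_half_add_int_mul_neg_one_sub (θ : ℝ) (m : ℤ) :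
    cos (θ / 2 + ((-1 - m : ℤ) : ℝ) * θ) = cos (θ / 2 + m * θ) := by
  rw [← cos_neg]
  push_cast
  ring_nf

theorem Real.cos_half_add_int_mul_two_mul_sub {n i : ℕ} {θ : ℝ} (hθ : n * θ = i * π) (m : ℤ) :
    cos (θ / 2 + ((2 * n - 1 - m : ℤ) : ℝ) * θ) = cos (θ / 2 + m * θ) := by
  rw [← cos_nat_mul_two_pi_sub (θ / 2 + m * θ) i]
  push_cast
  congr 1
  linear_combination 2 * hθ

theorem stmt_1_general (n l : ℕ) (w : ℕ → ℝ)
    (hln : l ≤ (n - 1) / 2)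
    (hzero : ∀ k, l < k → w k = 0)
    (W : Matrix (Fin n) (Fin n) ℝ)
    (hW : ∀ i j : Fin n, W i j =
      w ((i.val : ℤ) - (j.val : ℤ)).natAbs
        + (w (i.val + j.val + 1) + w (2 * n - 1 - i.val - j.val)))
    (i : Fin n) :
    W.mulVec
        (fun j : Fin n =>
          Real.cos ((i.val : ℝ) * (2 * (j.val : ℝ) + 1) * Real.pi / (2 * (n : ℝ))))
      = (w 0 + 2 * ∑ j ∈ Finset.Icc 1 l,
            w j * Real.cos ((j : ℝ) * (i.val : ℝ) * Real.pi / (n : ℝ))) •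
        (fun j : Fin n =>
          Real.cos ((i.val : ℝ) * (2 * (j.val : ℝ) + 1) * Real.pi / (2 * (n : ℝ)))) := by
  set θ : ℝ := i * π / n with hθ
  have hnθ : n * θ = i * π := by
    rw [hθ, mul_div_cancel₀ _ (Nat.cast_ne_zero.mpr (Fin.pos i).ne')]
  have hq : (fun j : Fin n => cos (i * (2 * (j : ℝ) + 1) * π / (2 * n)))
      = fun j : Fin n => cos (θ / 2 + (((j : ℕ) : ℤ) : ℝ) * θ) := by
    funext j
    congr 1
    push_cast
    ring
  have heig : ∑ j ∈ Icc 1 l, w j * cos (j * i * π / n) = ∑ j ∈ Icc 1 l, w j * cos (j * θ) :=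
    sum_congr rfl fun j _ => by rw [hθ]; ring_nf
  rw [hq, heig]
  funext r
  calc W.mulVec (fun j : Fin n => cos (θ / 2 + (((j : ℕ) : ℤ) : ℝ) * θ)) r
      = ∑ j : Fin n, (w ((r : ℤ) - (j : ℤ)).natAbs + (w (r + j + 1) + w (2 * n - 1 - r - j)))
          * cos (θ / 2 + (((j : ℕ) : ℤ) : ℝ) * θ) := by
        simp only [Matrix.mulVec, dotProduct, hW]
    _ = ∑ᶠ k : ℤ, w k.natAbs * cos (θ / 2 + ((r - k : ℤ) : ℝ) * θ) :=
        sum_reflective_row_eq_finsum (x := fun m : ℤ => cos (θ / 2 + m * θ))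
          (fun k hk => hzero k (by omega)) (cos_half_add_int_mul_neg_one_sub θ)
          (cos_half_add_int_mul_two_mul_sub hnθ) r
    _ = _ := finsum_mul_cos_sub_eq hzero _ _ _

/-- Eigenvectors/eigenvalues of the Reflective-BCs matrix
`W^R = T + H^R`: the DCT-III vectors `q_i` with entries `cos((i-1)(2j-1)π/(2n))`
are eigenvectors, with eigenvalues `λ_i^R = w_0 + 2 ∑_{j=1}^l w_j cos(j (i-1) π / n)`.
(Indices are 0-based: `i.val` plays the role of `i - 1`, `j.val` of `j - 1`.) -/
theorem stmt_1 (n l : ℕ) (hn : 2 ≤ n) (w : ℕ → ℝ)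
    (hl : 0 < l) (hln : l ≤ (n - 1) / 2)
    (hpos : ∀ j, j ≤ l → 0 < w j)
    (hzero : ∀ k, l < k → w k = 0)
    (hsum : w 0 + 2 * ∑ j ∈ Finset.Icc 1 l, w j = 1)
    (W : Matrix (Fin n) (Fin n) ℝ)
    (hW : ∀ i j : Fin n, W i j =
      w ((i.val : ℤ) - (j.val : ℤ)).natAbs
        + (w (i.val + j.val + 1) + w (2 * n - 1 - i.val - j.val)))
    (i : Fin n) :
    W.mulVec
        (fun j : Fin n =>
          Real.cos ((i.val : ℝ) * (2 * (j.val : ℝ) + 1) * Real.pi / (2 * (n : ℝ))))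
      = (w 0 + 2 * ∑ j ∈ Finset.Icc 1 l,
            w j * Real.cos ((j : ℝ) * (i.val : ℝ) * Real.pi / (n : ℝ))) •
        (fun j : Fin n =>
          Real.cos ((i.val : ℝ) * (2 * (j.val : ℝ) + 1) * Real.pi / (2 * (n : ℝ)))) :=
  stmt_1_general n l w hln hzero W hW i
end

section
/- Let n ≥ 3 and let w_0, w_1, …, w_l be a symmetric filter of length l (0 < l ≤ ⌊(n−1)/2⌋), with w_k = 0 for k > l. Let Ŵ^AR = T̂ − Ĥ ∈ ℝ^{(n−2)×(n−2)}, where [T̂]_{p,q} = w_{|p−q|} and [Ĥ]_{p,q} = w_{p+q} + w_{2n−2−p−q} (indices 1 ≤ p,q ≤ n−2). Then for every i ∈ {1,…,n−2}, the vector ŝ_i with entries (ŝ_i)_q = sin(iqπ/(n−1)) satisfies Ŵ^AR ŝ_i = λ̂_i ŝ_i, where λ̂_i = w_0 + 2∑_{j=1}^{l} w_j cos(jiπ/(n−1)). -/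
open Finset

private lemma ico_split (f : ℤ → ℝ) (a b c : ℤ) (hab : a ≤ b) (hbc : b ≤ c) :
    ∑ k ∈ Finset.Ico a c, f k = ∑ k ∈ Finset.Ico a b, f k + ∑ k ∈ Finset.Ico b c, f k := by
  rw [← Finset.Ico_union_Ico_eq_Ico hab hbc,
    Finset.sum_union (Finset.Ico_disjoint_Ico_consecutive a b c)]

private lemma reindex (s : Finset ℤ) (t : Finset ℕ) (e : ℕ → ℤ) (e' : ℤ → ℕ)
    (h1 : ∀ q ∈ t, e q ∈ s) (h2 : ∀ k ∈ s, e' k ∈ t)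
    (h3 : ∀ q ∈ t, e' (e q) = q) (h4 : ∀ k ∈ s, e (e' k) = k)
    (f : ℤ → ℝ) (g : ℕ → ℝ) (h5 : ∀ q ∈ t, f (e q) = g q) :
    ∑ k ∈ s, f k = ∑ q ∈ t, g q := by
  refine Finset.sum_nbij' e' e h2 h1 h4 h3 ?_
  intro k hk; rw [← h5 _ (h2 k hk), h4 k hk]

private lemma key (m l : ℕ) (w : ℕ → ℝ) (S : ℤ → ℝ)
    (hm : 2 ≤ m) (hl : 0 < l) (hlm : 2 * l ≤ m)
    (hzero : ∀ k, l < k → w k = 0)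
    (hS0 : S 0 = 0) (hSm : S (m : ℤ) = 0)
    (hSneg : ∀ k, S (-k) = -S k)
    (hSrefl : ∀ k, S (2 * (m : ℤ) - k) = -S k)
    (p : ℕ) (hp1 : 1 ≤ p) (hp2 : p ≤ m - 1) :
    ∑ q ∈ Finset.range (m - 1),
      (w ((p : ℤ) - ((q : ℤ) + 1)).natAbs - (w (p + q + 1) + w (2 * m - p - (q + 1))))
        * S ((q : ℤ) + 1)
      = w 0 * S (p : ℤ)
        + ∑ j ∈ Finset.Icc 1 l, w j * (S ((p : ℤ) + (j : ℤ)) + S ((p : ℤ) - (j : ℤ))) := by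
  obtain ⟨M, rfl⟩ : ∃ M, m = M + 2 := ⟨m - 2, by omega⟩
  have hred : M + 2 - 1 = M + 1 := rfl
  rw [hred] at hp2 ⊢
  set F : ℤ → ℝ := fun k => w ((p - k).natAbs) * S k with hF
  have e0 : S ((0 : ℕ) : ℤ) = 0 := by simpa using hS0
  -- part A
  have hA : ∑ k ∈ Finset.Ico (1 : ℤ) ((M : ℤ) + 2), F k
      = ∑ q ∈ Finset.range (M + 1), w (((p : ℤ) - ((q : ℤ) + 1)).natAbs) * S ((q : ℤ) + 1) := by
    refine reindex _ _ (fun q : ℕ => (q : ℤ) + 1) (fun k : ℤ => (k - 1).toNat) ?_ ?_ ?_ ?_ _ _ ?_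
    · intro q hq; simp only [Finset.mem_range] at hq; simp only [Finset.mem_Ico]
      (try dsimp only); omega
    · intro k hk; simp only [Finset.mem_Ico] at hk; simp only [Finset.mem_range]
      (try dsimp only); omega
    · intro q hq; simp only [Finset.mem_range] at hq; (try dsimp only); omega
    · intro k hk; simp only [Finset.mem_Ico] at hk; (try dsimp only); omega
    · intro q hq; rfl
  -- part B
  have hB : ∑ k ∈ Finset.Ico (2 - ((M : ℤ) + 2)) 1, F k
      = - ∑ q ∈ Finset.range (M + 1), w (p + q + 1) * S ((q : ℤ) + 1) := by
    have step1 : ∑ k ∈ Finset.Ico (2 - ((M : ℤ) + 2)) 1, F k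
        = ∑ q ∈ Finset.range (M + 1), (- (w (p + q) * S ((q : ℕ) : ℤ))) := by
      refine reindex _ _ (fun q : ℕ => -(q : ℤ)) (fun k : ℤ => (-k).toNat) ?_ ?_ ?_ ?_ _ _ ?_
      · intro q hq; simp only [Finset.mem_range] at hq; simp only [Finset.mem_Ico]
        (try dsimp only); omega
      · intro k hk; simp only [Finset.mem_Ico] at hk; simp only [Finset.mem_range]
        (try dsimp only); omega
      · intro q hq; simp only [Finset.mem_range] at hq; (try dsimp only); omega
      · intro k hk; simp only [Finset.mem_Ico] at hk; (try dsimp only); omega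
      · intro q hq; simp only [Finset.mem_range] at hq
        rw [hF]; dsimp only
        have h1 : ((p : ℤ) - (-(q : ℤ))).natAbs = p + q := by omega
        rw [h1, hSneg]
        ring
    rw [step1, Finset.sum_neg_distrib, neg_inj]
    have hz1 : w (p + (M + 1)) = 0 := hzero _ (by omega)
    calc ∑ x ∈ Finset.range (M + 1), w (p + x) * S ((x : ℕ) : ℤ)
        = ∑ x ∈ Finset.range (M + 1 + 1), w (p + x) * S ((x : ℕ) : ℤ) := by
          rw [Finset.sum_range_succ (fun x => w (p + x) * S ((x : ℕ) : ℤ)) (M + 1)]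
          try dsimp only
          rw [hz1, zero_mul, add_zero]
      _ = ∑ x ∈ Finset.range (M + 1), w (p + (x + 1)) * S (((x + 1 : ℕ)) : ℤ) := by
          rw [Finset.sum_range_succ' (fun x => w (p + x) * S ((x : ℕ) : ℤ)) (M + 1)]
          try dsimp only
          rw [e0, mul_zero, add_zero]
      _ = ∑ x ∈ Finset.range (M + 1), w (p + x + 1) * S ((x : ℤ) + 1) := by
          apply Finset.sum_congr rfl
          intro x hx
          have h2 : ((x + 1 : ℕ) : ℤ) = (x : ℤ) + 1 := by push_cast; ring
          rw [h2]
          have h3 : p + (x + 1) = p + x + 1 := by omega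
          rw [h3]
  -- part C
  have hC : ∑ k ∈ Finset.Ico ((M : ℤ) + 2) (2 * ((M : ℤ) + 2) - 1), F k
      = - ∑ q ∈ Finset.range (M + 1), w (2 * (M + 2) - p - (q + 1)) * S ((q : ℤ) + 1) := by
    have step1 : ∑ k ∈ Finset.Ico ((M : ℤ) + 2) (2 * ((M : ℤ) + 2) - 1), F k
        = ∑ q ∈ Finset.range (M + 1), (- (w (2 * (M + 2) - p - (q + 2)) * S (((q + 2 : ℕ)) : ℤ))) := by
      refine reindex _ _ (fun q : ℕ => 2 * ((M : ℤ) + 2) - ((q : ℤ) + 2))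
        (fun k : ℤ => (2 * ((M : ℤ) + 2) - 2 - k).toNat) ?_ ?_ ?_ ?_ _ _ ?_
      · intro q hq; simp only [Finset.mem_range] at hq; simp only [Finset.mem_Ico]
        (try dsimp only); omega
      · intro k hk; simp only [Finset.mem_Ico] at hk; simp only [Finset.mem_range]
        (try dsimp only); omega
      · intro q hq; simp only [Finset.mem_range] at hq; (try dsimp only); omega
      · intro k hk; simp only [Finset.mem_Ico] at hk; (try dsimp only); omega
      · intro q hq; simp only [Finset.mem_range] at hq
        rw [hF]; dsimp only
        have h1 : ((p : ℤ) - (2 * ((M : ℤ) + 2) - ((q : ℤ) + 2))).natAbs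
            = 2 * (M + 2) - p - (q + 2) := by omega
        have h2 : 2 * ((M : ℤ) + 2) - ((q : ℤ) + 2)
            = 2 * (((M + 2 : ℕ)) : ℤ) - (((q + 2 : ℕ)) : ℤ) := by push_cast; ring
        rw [h1, h2, hSrefl]
        ring
    rw [step1, Finset.sum_neg_distrib, neg_inj]
    -- ∑_{q<M+1} g2 (q+2) = ∑_{q<M+1} g2 (q+1)  where g2 t = w (2(M+2) - p - t) * S t
    have hz1 : w (2 * (M + 2) - p - 1) = 0 := hzero _ (by omega)
    have hzm : S (((M + 2 : ℕ)) : ℤ) = 0 := by exact_mod_cast hSm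
    calc ∑ q ∈ Finset.range (M + 1), w (2 * (M + 2) - p - (q + 2)) * S (((q + 2 : ℕ)) : ℤ)
        = ∑ q ∈ Finset.range (M + 1 + 1), w (2 * (M + 2) - p - (q + 1)) * S (((q + 1 : ℕ)) : ℤ) := by
          rw [Finset.sum_range_succ' (fun q => w (2 * (M + 2) - p - (q + 1)) * S (((q + 1 : ℕ)) : ℤ)) (M + 1)]
          rw [hz1, zero_mul, add_zero]
      _ = ∑ q ∈ Finset.range (M + 1), w (2 * (M + 2) - p - (q + 1)) * S (((q + 1 : ℕ)) : ℤ) := by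
          rw [Finset.sum_range_succ (fun q => w (2 * (M + 2) - p - (q + 1)) * S (((q + 1 : ℕ)) : ℤ)) (M + 1)]
          try dsimp only
          have h3 : (M + 1 + 1 : ℕ) = M + 2 := rfl
          rw [h3, hzm, mul_zero, add_zero]
      _ = ∑ q ∈ Finset.range (M + 1), w (2 * (M + 2) - p - (q + 1)) * S ((q : ℤ) + 1) := by
          apply Finset.sum_congr rfl
          intro x hx
          have h2 : ((x + 1 : ℕ) : ℤ) = (x : ℤ) + 1 := by push_cast; ring
          rw [h2]
  -- combine the three parts
  have hsplit : ∑ k ∈ Finset.Ico (2 - ((M : ℤ) + 2)) (2 * ((M : ℤ) + 2) - 1), F k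
      = ∑ k ∈ Finset.Ico (2 - ((M : ℤ) + 2)) 1, F k
        + ∑ k ∈ Finset.Ico (1 : ℤ) ((M : ℤ) + 2), F k
        + ∑ k ∈ Finset.Ico ((M : ℤ) + 2) (2 * ((M : ℤ) + 2) - 1), F k := by
    rw [ico_split F (2 - ((M : ℤ) + 2)) 1 (2 * ((M : ℤ) + 2) - 1) (by omega) (by omega),
      ico_split F (1 : ℤ) ((M : ℤ) + 2) (2 * ((M : ℤ) + 2) - 1) (by omega) (by omega)]
    ring
  -- shrink to the support of w
  have hshrink : ∑ k ∈ Finset.Ico (2 - ((M : ℤ) + 2)) (2 * ((M : ℤ) + 2) - 1), F k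
      = ∑ k ∈ Finset.Icc ((p : ℤ) - l) ((p : ℤ) + l), F k := by
    refine (Finset.sum_subset ?_ ?_).symm
    · intro k hk; simp only [Finset.mem_Icc] at hk; simp only [Finset.mem_Ico]; omega
    · intro k hk hk2
      simp only [Finset.mem_Ico] at hk; simp only [Finset.mem_Icc] at hk2
      rw [hF]; dsimp only
      rw [hzero ((p : ℤ) - k).natAbs (by omega), zero_mul]
  -- reindex to j = p - k
  have hre : ∑ k ∈ Finset.Icc ((p : ℤ) - l) ((p : ℤ) + l), F k
      = ∑ j ∈ Finset.Icc (-(l : ℤ)) (l : ℤ), w (j.natAbs) * S ((p : ℤ) - j) := by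
    refine Finset.sum_nbij' (fun k : ℤ => (p : ℤ) - k) (fun j : ℤ => (p : ℤ) - j)
      ?_ ?_ ?_ ?_ ?_
    · intro k hk; simp only [Finset.mem_Icc] at hk ⊢; omega
    · intro j hj; simp only [Finset.mem_Icc] at hj ⊢; omega
    · intro k _; (try dsimp only); omega
    · intro j _; (try dsimp only); omega
    · intro k hk
      rw [hF]; dsimp only
      congr 2
      omega
  -- split the symmetric interval
  have hfin : ∑ j ∈ Finset.Icc (-(l : ℤ)) (l : ℤ), w (j.natAbs) * S ((p : ℤ) - j)
      = w 0 * S (p : ℤ)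
        + ∑ j ∈ Finset.Icc 1 l, w j * (S ((p : ℤ) + (j : ℤ)) + S ((p : ℤ) - (j : ℤ))) := by
    have hIccIco : Finset.Icc (-(l : ℤ)) (l : ℤ) = Finset.Ico (-(l : ℤ)) ((l : ℤ) + 1) := by
      ext x; simp only [Finset.mem_Icc, Finset.mem_Ico]; omega
    rw [hIccIco,
      ico_split _ (-(l : ℤ)) 0 ((l : ℤ) + 1) (by omega) (by omega),
      ico_split _ (0 : ℤ) 1 ((l : ℤ) + 1) (by omega) (by omega)]
    have h00 : ∑ j ∈ Finset.Ico (0 : ℤ) 1, w (j.natAbs) * S ((p : ℤ) - j)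
        = w 0 * S (p : ℤ) := by
      have : Finset.Ico (0 : ℤ) 1 = {0} := rfl
      rw [this, Finset.sum_singleton]
      norm_num
    have hneg : ∑ j ∈ Finset.Ico (-(l : ℤ)) 0, w (j.natAbs) * S ((p : ℤ) - j)
        = ∑ j ∈ Finset.Icc 1 l, w j * S ((p : ℤ) + (j : ℤ)) := by
      refine reindex _ _ (fun j : ℕ => -(j : ℤ)) (fun k : ℤ => (-k).toNat) ?_ ?_ ?_ ?_ _ _ ?_
      · intro q hq; simp only [Finset.mem_Icc] at hq; simp only [Finset.mem_Ico]
        (try dsimp only); omega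
      · intro k hk; simp only [Finset.mem_Ico] at hk; simp only [Finset.mem_Icc]
        (try dsimp only); omega
      · intro q hq; simp only [Finset.mem_Icc] at hq; (try dsimp only); omega
      · intro k hk; simp only [Finset.mem_Ico] at hk; (try dsimp only); omega
      · intro q hq; simp only [Finset.mem_Icc] at hq
        have h1 : (-(q : ℤ)).natAbs = q := by omega
        have h2 : (p : ℤ) - (-(q : ℤ)) = (p : ℤ) + (q : ℤ) := by ring
        rw [h1, h2]
    have hpos : ∑ j ∈ Finset.Ico (1 : ℤ) ((l : ℤ) + 1), w (j.natAbs) * S ((p : ℤ) - j)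
        = ∑ j ∈ Finset.Icc 1 l, w j * S ((p : ℤ) - (j : ℤ)) := by
      refine reindex _ _ (fun j : ℕ => (j : ℤ)) (fun k : ℤ => k.toNat) ?_ ?_ ?_ ?_ _ _ ?_
      · intro q hq; simp only [Finset.mem_Icc] at hq; simp only [Finset.mem_Ico]
        (try dsimp only); omega
      · intro k hk; simp only [Finset.mem_Ico] at hk; simp only [Finset.mem_Icc]
        (try dsimp only); omega
      · intro q hq; simp only [Finset.mem_Icc] at hq; (try dsimp only); omega
      · intro k hk; simp only [Finset.mem_Ico] at hk; (try dsimp only); omega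
      · intro q hq; simp only [Finset.mem_Icc] at hq
        have h1 : ((q : ℤ)).natAbs = q := by omega
        rw [h1]
    rw [h00, hneg, hpos]
    have hcomb : ∑ j ∈ Finset.Icc 1 l, w j * S ((p : ℤ) + (j : ℤ))
        + ∑ j ∈ Finset.Icc 1 l, w j * S ((p : ℤ) - (j : ℤ))
        = ∑ j ∈ Finset.Icc 1 l, w j * (S ((p : ℤ) + (j : ℤ)) + S ((p : ℤ) - (j : ℤ))) := by
      rw [← Finset.sum_add_distrib]
      apply Finset.sum_congr rfl; intro j hj; ring
    rw [← hcomb]; ring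
  -- assemble
  have lhs_eq : ∑ q ∈ Finset.range (M + 1),
      (w ((p : ℤ) - ((q : ℤ) + 1)).natAbs - (w (p + q + 1) + w (2 * (M + 2) - p - (q + 1))))
        * S ((q : ℤ) + 1)
      = ∑ q ∈ Finset.range (M + 1), w (((p : ℤ) - ((q : ℤ) + 1)).natAbs) * S ((q : ℤ) + 1)
        - (∑ q ∈ Finset.range (M + 1), w (p + q + 1) * S ((q : ℤ) + 1)
          + ∑ q ∈ Finset.range (M + 1), w (2 * (M + 2) - p - (q + 1)) * S ((q : ℤ) + 1)) := by
    rw [← Finset.sum_add_distrib, ← Finset.sum_sub_distrib]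
    apply Finset.sum_congr rfl; intro q hq; ring
  have hcast : ((M + 2 : ℕ) : ℤ) = (M : ℤ) + 2 := by push_cast; ring
  rw [lhs_eq, ← hA]
  rw [show ∑ q ∈ Finset.range (M + 1), w (p + q + 1) * S ((q : ℤ) + 1)
      = - ∑ k ∈ Finset.Ico (2 - ((M : ℤ) + 2)) 1, F k from by rw [hB]; ring]
  rw [show ∑ q ∈ Finset.range (M + 1), w (2 * (M + 2) - p - (q + 1)) * S ((q : ℤ) + 1)
      = - ∑ k ∈ Finset.Ico ((M : ℤ) + 2) (2 * ((M : ℤ) + 2) - 1), F k from by rw [hC]; ring]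
  rw [← hfin, ← hre, ← hshrink, hsplit]
  ring

private lemma sin_pair (X Y : ℝ) :
    Real.sin (X + Y) + Real.sin (X - Y) = 2 * Real.cos Y * Real.sin X := by
  rw [Real.sin_add, Real.sin_sub]; ring


/-- Eigenvectors/eigenvalues of the inner Anti-Reflective matrix
`Ŵ^AR = T̂ - Ĥ ∈ ℝ^{(n-2)×(n-2)}`: the DST-I vectors `ŝ_i` with entries
`sin(i q π/(n-1))` are eigenvectors, with eigenvalues
`λ̂_i = w_0 + 2 ∑_{j=1}^l w_j cos(j i π/(n-1))`.
(Indices are 0-based: `i.val` plays the role of `i - 1`, `q.val` of `q - 1`.) -/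
theorem stmt_2 (n l : ℕ) (hn : 3 ≤ n) (w : ℕ → ℝ)
    (hl : 0 < l) (hln : l ≤ (n - 1) / 2)
    (hpos : ∀ j, j ≤ l → 0 < w j)
    (hzero : ∀ k, l < k → w k = 0)
    (hsum : w 0 + 2 * ∑ j ∈ Finset.Icc 1 l, w j = 1)
    (What : Matrix (Fin (n - 2)) (Fin (n - 2)) ℝ)
    (hWhat : ∀ p q : Fin (n - 2), What p q =
      w ((p.val : ℤ) - (q.val : ℤ)).natAbs
        - (w (p.val + q.val + 2) + w (2 * n - 4 - p.val - q.val)))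
    (i : Fin (n - 2)) :
    What.mulVec
        (fun q : Fin (n - 2) =>
          Real.sin (((i.val : ℝ) + 1) * ((q.val : ℝ) + 1) * Real.pi / ((n : ℝ) - 1)))
      = (w 0 + 2 * ∑ j ∈ Finset.Icc 1 l,
            w j * Real.cos ((j : ℝ) * ((i.val : ℝ) + 1) * Real.pi / ((n : ℝ) - 1))) •
        (fun q : Fin (n - 2) =>
          Real.sin (((i.val : ℝ) + 1) * ((q.val : ℝ) + 1) * Real.pi / ((n : ℝ) - 1))) := by
  have hn2 : ((n : ℝ) - 1) ≠ 0 := by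
    have h3 : (3 : ℝ) ≤ (n : ℝ) := by exact_mod_cast hn
    linarith
  have hcastm : (((n - 1 : ℕ)) : ℝ) = (n : ℝ) - 1 := by
    rw [Nat.cast_sub (by omega : 1 ≤ n)]; norm_num
  set S : ℤ → ℝ :=
    fun k => Real.sin (((i.val : ℝ) + 1) * ((k : ℤ) : ℝ) * Real.pi / ((n : ℝ) - 1)) with hSdef
  have hS0 : S 0 = 0 := by simp [hSdef]
  have hSm : S (((n - 1 : ℕ)) : ℤ) = 0 := by
    simp only [hSdef, Int.cast_natCast, hcastm]
    rw [show ((i.val : ℝ) + 1) * ((n : ℝ) - 1) * Real.pi / ((n : ℝ) - 1)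
        = ((i.val + 1 : ℕ) : ℝ) * Real.pi from by push_cast; field_simp]
    exact Real.sin_nat_mul_pi _
  have hSneg : ∀ k, S (-k) = -S k := by
    intro k
    simp only [hSdef]
    rw [show ((i.val : ℝ) + 1) * (((-k : ℤ)) : ℝ) * Real.pi / ((n : ℝ) - 1)
        = -(((i.val : ℝ) + 1) * ((k : ℤ) : ℝ) * Real.pi / ((n : ℝ) - 1)) from by
          push_cast; ring]
    exact Real.sin_neg _
  have hSrefl : ∀ k, S (2 * (((n - 1 : ℕ)) : ℤ) - k) = -S k := by
    intro k
    simp only [hSdef]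
    have harg : ((i.val : ℝ) + 1) * (((2 * (((n - 1 : ℕ)) : ℤ) - k : ℤ)) : ℝ) * Real.pi / ((n : ℝ) - 1)
        = ((i.val + 1 : ℕ) : ℝ) * (2 * Real.pi)
          - ((i.val : ℝ) + 1) * ((k : ℤ) : ℝ) * Real.pi / ((n : ℝ) - 1) := by
      push_cast [Nat.cast_sub (show 1 ≤ n by omega)]
      field_simp
    rw [harg, Real.sin_sub, Real.cos_nat_mul_two_pi]
    have hsin0 : Real.sin (((i.val + 1 : ℕ) : ℝ) * (2 * Real.pi)) = 0 := by
      rw [show ((i.val + 1 : ℕ) : ℝ) * (2 * Real.pi)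
          = ((2 * (i.val + 1) : ℕ) : ℝ) * Real.pi from by push_cast; ring]
      exact Real.sin_nat_mul_pi _
    rw [hsin0]
    ring
  funext p
  have hpv : p.val < n - 2 := p.isLt
  have hiv : i.val < n - 2 := i.isLt
  simp only [Matrix.mulVec, dotProduct, hWhat, Pi.smul_apply, smul_eq_mul]
  have mainkey := key (n - 1) l w S (by omega) hl (by omega) hzero hS0 hSm hSneg hSrefl
    (p.val + 1) (by omega) (by omega)
  rw [show n - 1 - 1 = n - 2 from by omega] at mainkey
  have hLHS : ∑ q : Fin (n - 2),
      (w ((p.val : ℤ) - (q.val : ℤ)).natAbs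
        - (w (p.val + q.val + 2) + w (2 * n - 4 - p.val - q.val)))
        * Real.sin (((i.val : ℝ) + 1) * ((q.val : ℝ) + 1) * Real.pi / ((n : ℝ) - 1))
      = ∑ q ∈ Finset.range (n - 2),
        (w (((p.val + 1 : ℕ) : ℤ) - ((q : ℤ) + 1)).natAbs
          - (w (p.val + 1 + q + 1) + w (2 * (n - 1) - (p.val + 1) - (q + 1))))
          * S ((q : ℤ) + 1) := by
    rw [Fin.sum_univ_eq_sum_range (fun q : ℕ =>
      (w ((p.val : ℤ) - (q : ℤ)).natAbs
        - (w (p.val + q + 2) + w (2 * n - 4 - p.val - q)))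
        * Real.sin (((i.val : ℝ) + 1) * ((q : ℝ) + 1) * Real.pi / ((n : ℝ) - 1))) (n - 2)]
    apply Finset.sum_congr rfl
    intro q hq
    simp only [Finset.mem_range] at hq
    have e1 : ((p.val : ℤ) - (q : ℤ)).natAbs = (((p.val + 1 : ℕ) : ℤ) - ((q : ℤ) + 1)).natAbs := by
      omega
    have e2 : p.val + q + 2 = p.val + 1 + q + 1 := by omega
    have e3 : 2 * n - 4 - p.val - q = 2 * (n - 1) - (p.val + 1) - (q + 1) := by omega
    have e4 : Real.sin (((i.val : ℝ) + 1) * ((q : ℝ) + 1) * Real.pi / ((n : ℝ) - 1))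
        = S ((q : ℤ) + 1) := by
      simp only [hSdef]
      push_cast
      ring_nf
    rw [e1, e2, e3, e4]
  rw [hLHS, mainkey]
  -- now the right-hand side
  have hsp : S (((p.val + 1 : ℕ)) : ℤ)
      = Real.sin (((i.val : ℝ) + 1) * ((p.val : ℝ) + 1) * Real.pi / ((n : ℝ) - 1)) := by
    simp only [hSdef]
    push_cast
    ring_nf
  have hpair : ∀ j : ℕ,
      S ((((p.val + 1 : ℕ)) : ℤ) + (j : ℤ)) + S ((((p.val + 1 : ℕ)) : ℤ) - (j : ℤ))
      = 2 * Real.cos ((j : ℝ) * ((i.val : ℝ) + 1) * Real.pi / ((n : ℝ) - 1))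
        * Real.sin (((i.val : ℝ) + 1) * ((p.val : ℝ) + 1) * Real.pi / ((n : ℝ) - 1)) := by
    intro j
    simp only [hSdef]
    have h1 : ((i.val : ℝ) + 1) * ((((((p.val + 1 : ℕ)) : ℤ) + (j : ℤ) : ℤ)) : ℝ) * Real.pi / ((n : ℝ) - 1)
        = ((i.val : ℝ) + 1) * ((p.val : ℝ) + 1) * Real.pi / ((n : ℝ) - 1)
          + (j : ℝ) * ((i.val : ℝ) + 1) * Real.pi / ((n : ℝ) - 1) := by
      push_cast; ring
    have h2 : ((i.val : ℝ) + 1) * ((((((p.val + 1 : ℕ)) : ℤ) - (j : ℤ) : ℤ)) : ℝ) * Real.pi / ((n : ℝ) - 1)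
        = ((i.val : ℝ) + 1) * ((p.val : ℝ) + 1) * Real.pi / ((n : ℝ) - 1)
          - (j : ℝ) * ((i.val : ℝ) + 1) * Real.pi / ((n : ℝ) - 1) := by
      push_cast; ring
    rw [h1, h2, sin_pair]
  have hsum2 : ∑ j ∈ Finset.Icc 1 l,
      w j * (S ((((p.val + 1 : ℕ)) : ℤ) + (j : ℤ)) + S ((((p.val + 1 : ℕ)) : ℤ) - (j : ℤ)))
      = (∑ j ∈ Finset.Icc 1 l,
          w j * Real.cos ((j : ℝ) * ((i.val : ℝ) + 1) * Real.pi / ((n : ℝ) - 1)))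
        * (2 * Real.sin (((i.val : ℝ) + 1) * ((p.val : ℝ) + 1) * Real.pi / ((n : ℝ) - 1))) := by
    rw [Finset.sum_mul]
    apply Finset.sum_congr rfl
    intro j hj
    rw [hpair j]
    ring
  rw [hsp, hsum2]
  ring
end

section
/- Let n ≥ 3 and let w_0, w_1, …, w_l be a symmetric filter of length l (0 < l ≤ ⌊(n−1)/2⌋), with w_k = 0 for k > l, and let W^AR ∈ ℝ^{n×n} be the Anti-Reflective matrix built from it. Then the vectors u_1 = (0,1,2,…,n−1)^T and u_2 = (n−1,n−2,…,1,0)^T satisfy W^AR u_1 = u_1 and W^AR u_2 = u_2, i.e. they are eigenvectors of W^AR with eigenvalue 1. -/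
/-- The Anti-Reflective matrix `W^AR ∈ ℝ^{n×n}` (0-based indices; `i.val` plays the
role of the 1-based index `i - 1`) built from a filter `w` of length `l`,
where `z j = 2 ∑_{k=j}^{l} w k`. -/
def antiReflectiveMatrix (n l : ℕ) (w : ℕ → ℝ) : Matrix (Fin n) (Fin n) ℝ :=
  Matrix.of fun i j : Fin n =>
    if i.val = 0 then (if j.val = 0 then 2 * ∑ k ∈ Finset.Icc 1 l, w k + w 0 else 0)
    else if i.val = n - 1 then (if j.val = n - 1 then 2 * ∑ k ∈ Finset.Icc 1 l, w k + w 0 else 0)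
    else if j.val = 0 then 2 * ∑ k ∈ Finset.Icc (i.val + 1) l, w k + w i.val
    else if j.val = n - 1 then 2 * ∑ k ∈ Finset.Icc (n - i.val) l, w k + w (n - 1 - i.val)
    else w ((i.val : ℤ) - (j.val : ℤ)).natAbs
        - (w (i.val + j.val) + w (2 * n - 2 - i.val - j.val))

open Finset


def innerf (n l : ℕ) (w : ℕ → ℝ) (i j : ℕ) : ℝ :=
  if j = 0 then 2 * ∑ k ∈ Finset.Icc (i + 1) l, w k + w i
  else if j = n - 1 then 2 * ∑ k ∈ Finset.Icc (n - i) l, w k + w (n - 1 - i)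
  else w ((i : ℤ) - (j : ℤ)).natAbs - (w (i + j) + w (2 * n - 2 - i - j))

lemma ind_sum {N : ℕ} {P : ℕ → Prop} [DecidablePred P] {s : Finset ℕ}
    (hP : ∀ k, k ∈ s ↔ (k < N ∧ P k)) (c w : ℕ → ℝ) :
    ∑ k ∈ s, c k * w k = ∑ k ∈ range N, (if P k then c k else 0) * w k := by
  have hs : s = (range N).filter P := by
    ext k; simp [hP k, Finset.mem_filter]
  rw [hs, Finset.sum_filter]
  exact Finset.sum_congr rfl fun k _ => by split_ifs <;> simp

lemma shift_ind {m a N : ℕ} {P : ℕ → Prop} [DecidablePred P]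
    (hP : ∀ k, (a ≤ k ∧ k < a + m) ↔ (k < N ∧ P k)) (ψ : ℕ → ℝ) (c w : ℕ → ℝ)
    (hφ : ∀ j, j < m → ψ j = c (a + j) * w (a + j)) :
    ∑ j ∈ range m, ψ j = ∑ k ∈ range N, (if P k then c k else 0) * w k := by
  rw [Finset.sum_congr rfl (fun j hj => hφ j (mem_range.mp hj))]
  have h1 : ∑ j ∈ range m, c (a + j) * w (a + j) = ∑ k ∈ Ico a (a + m), c k * w k := by
    rw [Finset.sum_Ico_eq_sum_range, show a + m - a = m by omega]
  rw [h1]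
  exact ind_sum (fun k => by rw [← hP k, Finset.mem_Ico]) c w

lemma rev_ind {m b N : ℕ} (hmb : m ≤ b + 1) {P : ℕ → Prop} [DecidablePred P]
    (hP : ∀ k, (b + 1 - m ≤ k ∧ k < b + 1) ↔ (k < N ∧ P k)) (ψ : ℕ → ℝ) (c w : ℕ → ℝ)
    (hφ : ∀ j, j < m → ψ j = c (b - j) * w (b - j)) :
    ∑ j ∈ range m, ψ j = ∑ k ∈ range N, (if P k then c k else 0) * w k := by
  rw [Finset.sum_congr rfl (fun j hj => hφ j (mem_range.mp hj))]
  have h1 : ∑ j ∈ range m, c (b - j) * w (b - j)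
      = ∑ j ∈ range m, c (b + 1 - m + j) * w (b + 1 - m + j) := by
    rw [← Finset.sum_range_reflect (fun j => c (b + 1 - m + j) * w (b + 1 - m + j)) m]
    refine Finset.sum_congr rfl fun j hj => ?_
    have hj' := mem_range.mp hj
    have : b + 1 - m + (m - 1 - j) = b - j := by omega
    rw [this]
  rw [h1]
  exact shift_ind (fun k => by rw [← hP k]; omega) _ c w (fun j _ => rfl)

lemma single_ind {a N : ℕ} {P : ℕ → Prop} [DecidablePred P]
    (hP : ∀ k, k = a ↔ (k < N ∧ P k)) (c w : ℕ → ℝ) :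
    c a * w a = ∑ k ∈ range N, (if P k then c k else 0) * w k := by
  have := ind_sum (s := {a}) (fun k => by rw [Finset.mem_singleton, hP k]) c w
  simpa using this

lemma peel (m : ℕ) (f : ℕ → ℝ) :
    ∑ j ∈ range (m+3), f j = (∑ j ∈ range (m+1), f (j+1)) + f 0 + f (m+2) := by
  rw [show m+3 = (m+1)+1+1 from rfl, Finset.sum_range_succ, Finset.sum_range_succ']

set_option maxHeartbeats 1600000 in
lemma key2 (n l i : ℕ) (w : ℕ → ℝ) (hl2 : 2*l+1 ≤ n)
    (hzero : ∀ k, l < k → w k = 0)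
    (hsum : w 0 + 2 * ∑ j ∈ Finset.Icc 1 l, w j = 1)
    (hi1 : 1 ≤ i) (hi2 : i + 2 ≤ n) :
    ∑ j ∈ range n, innerf n l w i j * (j:ℝ) = (i:ℝ) := by
  obtain ⟨m, rfl⟩ : ∃ m, n = m + 3 := ⟨n-3, by omega⟩
  simp only [innerf, show m+3-1 = m+2 from by omega]
  rw [peel]
  simp only [Nat.cast_zero, mul_zero, add_zero]
  rw [if_neg (show ¬ (m+2 = 0) from by omega)]
  simp only [↓reduceIte]
  have hsplit :
      (∑ j ∈ range (m+1), (if j + 1 = 0 then 2 * ∑ k ∈ Icc (i + 1) l, w k + w i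
          else if j + 1 = m + 2 then 2 * ∑ k ∈ Icc (m + 3 - i) l, w k + w (m + 2 - i)
          else w ((i:ℤ) - (↑(j + 1):ℤ)).natAbs
            - (w (i + (j + 1)) + w (2 * (m + 3) - 2 - i - (j + 1)))) * (↑(j + 1):ℝ))
      = (∑ j ∈ range (m+1), w (((i:ℤ) - (↑(j+1):ℤ)).natAbs) * (↑(j+1):ℝ))
        - (∑ j ∈ range (m+1), w (i + (j+1)) * (↑(j+1):ℝ))
        - (∑ j ∈ range (m+1), w (2*(m+3) - 2 - i - (j+1)) * (↑(j+1):ℝ)) := by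
    rw [← Finset.sum_sub_distrib, ← Finset.sum_sub_distrib]
    refine Finset.sum_congr rfl fun j hj => ?_
    have hj' := Finset.mem_range.mp hj
    rw [if_neg (by omega), if_neg (by omega)]
    ring
  rw [hsplit]
  have h1 : (∑ j ∈ range (m+1), w (((i:ℤ) - (↑(j+1):ℤ)).natAbs) * (↑(j+1):ℝ))
      = (∑ j ∈ range i, w (((i:ℤ) - (↑(j+1):ℤ)).natAbs) * (↑(j+1):ℝ))
        + ∑ j ∈ range (m+1-i), w (((i:ℤ) - (↑(i+j+1):ℤ)).natAbs) * (↑(i+j+1):ℝ) := by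
    rw [Finset.range_eq_Ico,
      ← Finset.sum_Ico_consecutive _ (Nat.zero_le i) (show i ≤ m+1 by omega),
      ← Finset.range_eq_Ico, Finset.sum_Ico_eq_sum_range,
      show m + 1 - i = m+1-i from rfl]
  rw [h1]
  have e1 : (∑ j ∈ range i, w (((i:ℤ) - (↑(j+1):ℤ)).natAbs) * (↑(j+1):ℝ))
      = ∑ k ∈ range (2*m+6), (if k < i then (((i:ℤ) - (k:ℤ) : ℤ):ℝ) else 0) * w k := by
    refine rev_ind (b := i-1) (by omega) (fun k => by omega) _ _ w ?_
    intro j hj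
    have e : ((i:ℤ) - (↑(j+1):ℤ)).natAbs = i - 1 - j := by omega
    have e2 : ((i:ℤ) - ((i - 1 - j : ℕ) : ℤ)) = ((j:ℤ) + 1) := by omega
    rw [e, e2]
    push_cast
    ring
  have e2 : (∑ j ∈ range (m+1-i), w (((i:ℤ) - (↑(i+j+1):ℤ)).natAbs) * (↑(i+j+1):ℝ))
      = ∑ k ∈ range (2*m+6),
          (if 1 ≤ k ∧ k + i + 2 ≤ m + 3 then (((i:ℤ) + (k:ℤ) : ℤ):ℝ) else 0) * w k := by
    refine shift_ind (a := 1) (fun k => by omega) _ _ w ?_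
    intro j hj
    have e : ((i:ℤ) - (↑(i+j+1):ℤ)).natAbs = 1 + j := by omega
    have e2 : ((i:ℤ) + ((1 + j : ℕ) : ℤ)) = ((i:ℤ) + (j:ℤ) + 1) := by omega
    rw [e, e2]
    push_cast
    ring
  have e3 : (∑ j ∈ range (m+1), w (i + (j+1)) * (↑(j+1):ℝ))
      = ∑ k ∈ range (2*m+6),
          (if i + 1 ≤ k ∧ k + 2 ≤ m + 3 + i then (((k:ℤ) - (i:ℤ) : ℤ):ℝ) else 0) * w k := by
    refine shift_ind (a := i+1) (fun k => by omega) _ _ w ?_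
    intro j hj
    have e : i + (j+1) = i + 1 + j := by omega
    have e2 : (((i + 1 + j : ℕ) : ℤ) - (i:ℤ)) = ((j:ℤ) + 1) := by omega
    rw [e, e2]
    push_cast
    ring
  have e4 : (∑ j ∈ range (m+1), w (2*(m+3) - 2 - i - (j+1)) * (↑(j+1):ℝ))
      = ∑ k ∈ range (2*m+6),
          (if m + 3 ≤ k + i ∧ k + i + 3 ≤ 2*m+6 then
            ((2*(m:ℤ) + 4 - (i:ℤ) - (k:ℤ) : ℤ):ℝ) else 0) * w k := by
    refine rev_ind (b := 2*m+3-i) (by omega) (fun k => by omega) _ _ w ?_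
    intro j hj
    have e : 2*(m+3) - 2 - i - (j+1) = 2*m+3-i - j := by omega
    have e2 : (2*(m:ℤ) + 4 - (i:ℤ) - ((2*m+3-i - j : ℕ) : ℤ)) = ((j:ℤ) + 1) := by omega
    rw [e, e2]
    push_cast
    ring
  have e5 : (2 * ∑ k ∈ Icc (m + 3 - i) l, w k + w (m + 2 - i)) * (↑(m+2):ℝ)
      = (∑ k ∈ range (2*m+6), (if m + 3 ≤ k + i ∧ k ≤ l then ((2*(m:ℤ) + 4 : ℤ):ℝ) else 0) * w k)
        + ∑ k ∈ range (2*m+6), (if k + i = m + 2 then (((m:ℤ) + 2 : ℤ):ℝ) else 0) * w k := by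
    rw [← ind_sum (N := 2*m+6) (s := Finset.Icc (m+3-i) l) (P := fun k => m + 3 ≤ k + i ∧ k ≤ l)
          (fun k => by simp only [Finset.mem_Icc]; omega) (fun _ => ((2*(m:ℤ) + 4 : ℤ):ℝ)) w,
        ← single_ind (a := m+2-i) (N := 2*m+6) (P := fun k => k + i = m + 2)
          (fun k => by omega) (fun _ => (((m:ℤ) + 2 : ℤ):ℝ)) w,
        ← Finset.mul_sum]
    push_cast
    ring
  have e7 : (i:ℝ)
      = (∑ k ∈ range (2*m+6), (if k = 0 then ((i:ℤ):ℝ) else 0) * w k)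
        + ∑ k ∈ range (2*m+6), (if 1 ≤ k ∧ k ≤ l then ((2*(i:ℤ) : ℤ):ℝ) else 0) * w k := by
    rw [← single_ind (a := 0) (N := 2*m+6) (P := fun k => k = 0)
          (fun k => by omega) (fun _ => ((i:ℤ):ℝ)) w,
        ← ind_sum (N := 2*m+6) (s := Finset.Icc 1 l) (P := fun k => 1 ≤ k ∧ k ≤ l)
          (fun k => by simp only [Finset.mem_Icc]; omega) (fun _ => ((2*(i:ℤ) : ℤ):ℝ)) w,
        ← Finset.mul_sum]
    push_cast
    linear_combination (-(i:ℝ)) * hsum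
  rw [e1, e2, e3, e4, e5, e7]
  rw [← Finset.sum_add_distrib, ← Finset.sum_sub_distrib, ← Finset.sum_sub_distrib,
    ← Finset.sum_add_distrib, ← Finset.sum_add_distrib, ← Finset.sum_add_distrib]
  refine Finset.sum_congr rfl fun k hk => ?_
  rcases le_or_gt k l with hkl | hkl
  · have hc : (if k < i then (i:ℤ) - (k:ℤ) else 0)
        + (if 1 ≤ k ∧ k + i + 2 ≤ m + 3 then (i:ℤ) + (k:ℤ) else 0)
        - (if i + 1 ≤ k ∧ k + 2 ≤ m + 3 + i then (k:ℤ) - (i:ℤ) else 0)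
        - (if m + 3 ≤ k + i ∧ k + i + 3 ≤ 2*m+6 then 2*(m:ℤ) + 4 - (i:ℤ) - (k:ℤ) else 0)
        + ((if m + 3 ≤ k + i ∧ k ≤ l then 2*(m:ℤ) + 4 else 0)
          + (if k + i = m + 2 then (m:ℤ) + 2 else 0))
        = (if k = 0 then (i:ℤ) else 0) + (if 1 ≤ k ∧ k ≤ l then 2*(i:ℤ) else 0) := by
      split_ifs <;> omega
    have h2 := congrArg (fun t : ℤ => (t:ℝ) * w k) hc
    push_cast [apply_ite (fun t : ℤ => (t:ℝ))] at h2
    push_cast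
    linear_combination h2
  · rw [hzero k hkl]
    simp

set_option maxHeartbeats 1600000 in
lemma key1 (n l i : ℕ) (w : ℕ → ℝ) (hl2 : 2*l+1 ≤ n)
    (hzero : ∀ k, l < k → w k = 0)
    (hsum : w 0 + 2 * ∑ j ∈ Finset.Icc 1 l, w j = 1)
    (hi1 : 1 ≤ i) (hi2 : i + 2 ≤ n) :
    ∑ j ∈ range n, innerf n l w i j = 1 := by
  obtain ⟨m, rfl⟩ : ∃ m, n = m + 3 := ⟨n-3, by omega⟩
  simp only [innerf, show m+3-1 = m+2 from by omega]
  rw [peel]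
  rw [if_neg (show ¬ (m+2 = 0) from by omega)]
  simp only [↓reduceIte]
  have hsplit :
      (∑ j ∈ range (m+1), (if j + 1 = 0 then 2 * ∑ k ∈ Icc (i + 1) l, w k + w i
          else if j + 1 = m + 2 then 2 * ∑ k ∈ Icc (m + 3 - i) l, w k + w (m + 2 - i)
          else w ((i:ℤ) - (↑(j + 1):ℤ)).natAbs
            - (w (i + (j + 1)) + w (2 * (m + 3) - 2 - i - (j + 1)))))
      = (∑ j ∈ range (m+1), w (((i:ℤ) - (↑(j+1):ℤ)).natAbs))
        - (∑ j ∈ range (m+1), w (i + (j+1)))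
        - (∑ j ∈ range (m+1), w (2*(m+3) - 2 - i - (j+1))) := by
    rw [← Finset.sum_sub_distrib, ← Finset.sum_sub_distrib]
    refine Finset.sum_congr rfl fun j hj => ?_
    have hj' := Finset.mem_range.mp hj
    rw [if_neg (by omega), if_neg (by omega)]
    ring
  rw [hsplit]
  have h1 : (∑ j ∈ range (m+1), w (((i:ℤ) - (↑(j+1):ℤ)).natAbs))
      = (∑ j ∈ range i, w (((i:ℤ) - (↑(j+1):ℤ)).natAbs))
        + ∑ j ∈ range (m+1-i), w (((i:ℤ) - (↑(i+j+1):ℤ)).natAbs) := by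
    rw [Finset.range_eq_Ico,
      ← Finset.sum_Ico_consecutive _ (Nat.zero_le i) (show i ≤ m+1 by omega),
      ← Finset.range_eq_Ico, Finset.sum_Ico_eq_sum_range,
      show m + 1 - i = m+1-i from rfl]
  rw [h1]
  have e1 : (∑ j ∈ range i, w (((i:ℤ) - (↑(j+1):ℤ)).natAbs))
      = ∑ k ∈ range (2*m+6), (if k < i then ((1:ℤ):ℝ) else 0) * w k := by
    refine rev_ind (b := i-1) (by omega) (fun k => by omega) _ _ w ?_
    intro j hj
    have e : ((i:ℤ) - (↑(j+1):ℤ)).natAbs = i - 1 - j := by omega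
    rw [e]
    push_cast
    ring
  have e2 : (∑ j ∈ range (m+1-i), w (((i:ℤ) - (↑(i+j+1):ℤ)).natAbs))
      = ∑ k ∈ range (2*m+6),
          (if 1 ≤ k ∧ k + i + 2 ≤ m + 3 then ((1:ℤ):ℝ) else 0) * w k := by
    refine shift_ind (a := 1) (fun k => by omega) _ _ w ?_
    intro j hj
    have e : ((i:ℤ) - (↑(i+j+1):ℤ)).natAbs = 1 + j := by omega
    rw [e]
    push_cast
    ring
  have e3 : (∑ j ∈ range (m+1), w (i + (j+1)))
      = ∑ k ∈ range (2*m+6),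
          (if i + 1 ≤ k ∧ k + 2 ≤ m + 3 + i then ((1:ℤ):ℝ) else 0) * w k := by
    refine shift_ind (a := i+1) (fun k => by omega) _ _ w ?_
    intro j hj
    have e : i + (j+1) = i + 1 + j := by omega
    rw [e]
    push_cast
    ring
  have e4 : (∑ j ∈ range (m+1), w (2*(m+3) - 2 - i - (j+1)))
      = ∑ k ∈ range (2*m+6),
          (if m + 3 ≤ k + i ∧ k + i + 3 ≤ 2*m+6 then ((1:ℤ):ℝ) else 0) * w k := by
    refine rev_ind (b := 2*m+3-i) (by omega) (fun k => by omega) _ _ w ?_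
    intro j hj
    have e : 2*(m+3) - 2 - i - (j+1) = 2*m+3-i - j := by omega
    rw [e]
    push_cast
    ring
  have eA : (2 * ∑ k ∈ Icc (i + 1) l, w k + w i)
      = (∑ k ∈ range (2*m+6), (if i + 1 ≤ k ∧ k ≤ l then ((2:ℤ):ℝ) else 0) * w k)
        + ∑ k ∈ range (2*m+6), (if k = i then ((1:ℤ):ℝ) else 0) * w k := by
    rw [← ind_sum (N := 2*m+6) (s := Finset.Icc (i+1) l) (P := fun k => i + 1 ≤ k ∧ k ≤ l)
          (fun k => by simp only [Finset.mem_Icc]; omega) (fun _ => ((2:ℤ):ℝ)) w,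
        ← single_ind (a := i) (N := 2*m+6) (P := fun k => k = i)
          (fun k => by omega) (fun _ => ((1:ℤ):ℝ)) w,
        ← Finset.mul_sum]
    push_cast
    ring
  have e5 : (2 * ∑ k ∈ Icc (m + 3 - i) l, w k + w (m + 2 - i))
      = (∑ k ∈ range (2*m+6), (if m + 3 ≤ k + i ∧ k ≤ l then ((2:ℤ):ℝ) else 0) * w k)
        + ∑ k ∈ range (2*m+6), (if k + i = m + 2 then ((1:ℤ):ℝ) else 0) * w k := by
    rw [← ind_sum (N := 2*m+6) (s := Finset.Icc (m+3-i) l) (P := fun k => m + 3 ≤ k + i ∧ k ≤ l)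
          (fun k => by simp only [Finset.mem_Icc]; omega) (fun _ => ((2:ℤ):ℝ)) w,
        ← single_ind (a := m+2-i) (N := 2*m+6) (P := fun k => k + i = m + 2)
          (fun k => by omega) (fun _ => ((1:ℤ):ℝ)) w,
        ← Finset.mul_sum]
    push_cast
    ring
  have e7 : (1:ℝ)
      = (∑ k ∈ range (2*m+6), (if k = 0 then ((1:ℤ):ℝ) else 0) * w k)
        + ∑ k ∈ range (2*m+6), (if 1 ≤ k ∧ k ≤ l then ((2:ℤ):ℝ) else 0) * w k := by
    rw [← single_ind (a := 0) (N := 2*m+6) (P := fun k => k = 0)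
          (fun k => by omega) (fun _ => ((1:ℤ):ℝ)) w,
        ← ind_sum (N := 2*m+6) (s := Finset.Icc 1 l) (P := fun k => 1 ≤ k ∧ k ≤ l)
          (fun k => by simp only [Finset.mem_Icc]; omega) (fun _ => ((2:ℤ):ℝ)) w,
        ← Finset.mul_sum]
    push_cast
    linear_combination -hsum
  rw [e1, e2, e3, e4, eA, e5, e7]
  rw [← Finset.sum_add_distrib, ← Finset.sum_sub_distrib, ← Finset.sum_sub_distrib,
    ← Finset.sum_add_distrib, ← Finset.sum_add_distrib, ← Finset.sum_add_distrib,
    ← Finset.sum_add_distrib, ← Finset.sum_add_distrib]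
  refine Finset.sum_congr rfl fun k hk => ?_
  rcases le_or_gt k l with hkl | hkl
  · have hc : (if k < i then (1:ℤ) else 0)
        + (if 1 ≤ k ∧ k + i + 2 ≤ m + 3 then (1:ℤ) else 0)
        - (if i + 1 ≤ k ∧ k + 2 ≤ m + 3 + i then (1:ℤ) else 0)
        - (if m + 3 ≤ k + i ∧ k + i + 3 ≤ 2*m+6 then (1:ℤ) else 0)
        + ((if i + 1 ≤ k ∧ k ≤ l then (2:ℤ) else 0) + (if k = i then (1:ℤ) else 0))
        + ((if m + 3 ≤ k + i ∧ k ≤ l then (2:ℤ) else 0) + (if k + i = m + 2 then (1:ℤ) else 0))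
        = (if k = 0 then (1:ℤ) else 0) + (if 1 ≤ k ∧ k ≤ l then (2:ℤ) else 0) := by
      split_ifs <;> omega
    have h2 := congrArg (fun t : ℤ => (t:ℝ) * w k) hc
    push_cast [apply_ite (fun t : ℤ => (t:ℝ))] at h2
    push_cast
    linear_combination h2
  · rw [hzero k hkl]
    simp

lemma mulVec_comp (n l : ℕ) (w : ℕ → ℝ) (g : ℕ → ℝ) (x : Fin n) :
    (antiReflectiveMatrix n l w).mulVec (fun j => g j.val) x
      = ∑ j ∈ range n,
          (if (x:ℕ) = 0 then (if j = 0 then 2 * ∑ k ∈ Finset.Icc 1 l, w k + w 0 else 0)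
           else if (x:ℕ) = n - 1 then (if j = n - 1 then 2 * ∑ k ∈ Finset.Icc 1 l, w k + w 0 else 0)
           else innerf n l w (x:ℕ) j) * g j := by
  rw [← Fin.sum_univ_eq_sum_range (fun j =>
    (if (x:ℕ) = 0 then (if j = 0 then 2 * ∑ k ∈ Finset.Icc 1 l, w k + w 0 else 0)
     else if (x:ℕ) = n - 1 then (if j = n - 1 then 2 * ∑ k ∈ Finset.Icc 1 l, w k + w 0 else 0)
     else innerf n l w (x:ℕ) j) * g j) n]
  rfl


/-- The vectors `u₁ = (0,1,…,n-1)ᵀ` and `u₂ = (n-1,…,1,0)ᵀ` are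
eigenvectors of the Anti-Reflective matrix `W^AR` with eigenvalue 1. -/
theorem stmt_4 (n l : ℕ) (hn : 3 ≤ n)
    (hl : 0 < l) (hln : l ≤ (n - 1) / 2) (w : ℕ → ℝ)
    (hpos : ∀ j, j ≤ l → 0 < w j)
    (hzero : ∀ k, l < k → w k = 0)
    (hsum : w 0 + 2 * ∑ j ∈ Finset.Icc 1 l, w j = 1) :
    (antiReflectiveMatrix n l w).mulVec (fun j : Fin n => (j.val : ℝ))
        = (fun j : Fin n => (j.val : ℝ)) ∧
    (antiReflectiveMatrix n l w).mulVec (fun j : Fin n => (n : ℝ) - 1 - (j.val : ℝ))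
        = (fun j : Fin n => (n : ℝ) - 1 - (j.val : ℝ)) := by
  have hl2 : 2*l+1 ≤ n := by omega
  constructor
  · funext x
    rw [mulVec_comp n l w (fun t : ℕ => (t:ℝ)) x]
    by_cases hx0 : (x:ℕ) = 0
    · simp [hx0, ite_mul, Finset.sum_ite_eq', show 0 < n from by omega]
    · by_cases hxn : (x:ℕ) = n - 1
      · simp only [hx0, hxn, if_neg, ite_false, ↓reduceIte, ite_mul, zero_mul]
        simp only [eq_false (show ¬(n - 1 = 0) from by omega), if_false]
        rw [Finset.sum_ite_eq' (range n) (n-1)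
          (fun j => (2 * ∑ k ∈ Finset.Icc 1 l, w k + w 0) * (j:ℝ))]
        rw [if_pos (by simp [Finset.mem_range]; omega)]
        linear_combination (((n-1:ℕ):ℝ)) * hsum
      · have hi1 : 1 ≤ (x:ℕ) := by omega
        have hi2 : (x:ℕ) + 2 ≤ n := by have := x.isLt; omega
        have hcong : ∑ j ∈ range n,
            (if (x:ℕ) = 0 then (if j = 0 then 2 * ∑ k ∈ Finset.Icc 1 l, w k + w 0 else 0)
             else if (x:ℕ) = n - 1 then (if j = n - 1 then 2 * ∑ k ∈ Finset.Icc 1 l, w k + w 0 else 0)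
             else innerf n l w (x:ℕ) j) * (j:ℝ)
            = ∑ j ∈ range n, innerf n l w (x:ℕ) j * (j:ℝ) :=
          Finset.sum_congr rfl fun j _ => by rw [if_neg hx0, if_neg hxn]
        rw [hcong]
        exact key2 n l (x:ℕ) w hl2 hzero hsum hi1 hi2
  · funext x
    rw [mulVec_comp n l w (fun t : ℕ => (n:ℝ) - 1 - (t:ℝ)) x]
    by_cases hx0 : (x:ℕ) = 0
    · simp only [hx0, ↓reduceIte, ite_mul, zero_mul]
      rw [Finset.sum_ite_eq' (range n) 0
        (fun j => (2 * ∑ k ∈ Finset.Icc 1 l, w k + w 0) * ((n:ℝ) - 1 - (j:ℝ)))]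
      rw [if_pos (by simp [Finset.mem_range]; omega)]
      push_cast
      linear_combination ((n:ℝ) - 1) * hsum
    · by_cases hxn : (x:ℕ) = n - 1
      · simp only [hx0, hxn, if_neg, ite_false, ↓reduceIte, ite_mul, zero_mul]
        simp only [eq_false (show ¬(n - 1 = 0) from by omega), if_false]
        rw [Finset.sum_ite_eq' (range n) (n-1)
          (fun j => (2 * ∑ k ∈ Finset.Icc 1 l, w k + w 0) * ((n:ℝ) - 1 - (j:ℝ)))]
        rw [if_pos (by simp [Finset.mem_range]; omega)]
        rw [Nat.cast_sub (show 1 ≤ n by omega)]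
        push_cast
        ring
      · have hi1 : 1 ≤ (x:ℕ) := by omega
        have hi2 : (x:ℕ) + 2 ≤ n := by have := x.isLt; omega
        have hcong : ∑ j ∈ range n,
            (if (x:ℕ) = 0 then (if j = 0 then 2 * ∑ k ∈ Finset.Icc 1 l, w k + w 0 else 0)
             else if (x:ℕ) = n - 1 then (if j = n - 1 then 2 * ∑ k ∈ Finset.Icc 1 l, w k + w 0 else 0)
             else innerf n l w (x:ℕ) j) * ((n:ℝ) - 1 - (j:ℝ))
            = ∑ j ∈ range n, innerf n l w (x:ℕ) j * ((n:ℝ) - 1 - (j:ℝ)) :=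
          Finset.sum_congr rfl fun j _ => by rw [if_neg hx0, if_neg hxn]
        rw [hcong]
        have hd : ∑ j ∈ range n, innerf n l w (x:ℕ) j * ((n:ℝ) - 1 - (j:ℝ))
            = ((n:ℝ)-1) * (∑ j ∈ range n, innerf n l w (x:ℕ) j)
              - ∑ j ∈ range n, innerf n l w (x:ℕ) j * (j:ℝ) := by
          rw [Finset.mul_sum, ← Finset.sum_sub_distrib]
          exact Finset.sum_congr rfl fun j _ => by ring
        rw [hd, key1 n l (x:ℕ) w hl2 hzero hsum hi1 hi2,
          key2 n l (x:ℕ) w hl2 hzero hsum hi1 hi2]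
        ring
end

section
/- Let n ≥ 2 and let w_0, w_1, …, w_l be a symmetric filter of length l (0 < l ≤ ⌊(n−1)/2⌋), with w_k = 0 for k > l. Let W^R = T + H^R ∈ ℝ^{n×n} with [T]_{i,j} = w_{|i−j|} and [H^R]_{i,j} = w_{i+j−1} + w_{2n+1−i−j}. Then W^R is symmetric, its ∞-operator norm (maximum absolute row sum) equals 1, and every eigenvalue of W^R is real and lies in [−1, 1]. -/
/-!
In row `i` (0-based) the entries of `T` and `H^R` read `w` at the indices `|i - j|`, `i + j + 1`
and `2n - 1 - i - j`; as `j` runs over the row these cover `[0, n + i]` and `[1, 2n - 1 - i]`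
exactly once each. Both intervals contain the support `[0, l]` of the filter, so every row sums to
`w₀ + 2 ∑ wⱼ = 1`, and as the entries are nonnegative this is also the ∞-norm. A real symmetric
matrix is Hermitian, hence has real spectrum, and every eigenvalue is bounded by the ∞-operator
norm.
-/

open Finset

namespace Finset

variable {M : Type*} [AddCommMonoid M]

theorem sum_range_natAbs_sub (f : ℕ → M) {i n : ℕ} (hi : i < n) :
    ∑ j ∈ range n, f ((i : ℤ) - j).natAbs
      = ∑ k ∈ range (i + 1), f k + ∑ k ∈ Ico 1 (n - i), f k := by
  rw [range_eq_Ico, ← sum_Ico_consecutive _ (Nat.zero_le _) hi, ← range_eq_Ico,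
    ← sum_range_reflect _ (i + 1)]
  congr 1
  · refine sum_congr rfl fun j hj => ?_
    rw [mem_range] at hj
    congr 1
    omega
  · rw [← sum_Ico_add_right_sub_eq (a := 1) (b := n - i) (c := i), Nat.sub_add_cancel hi.le,
      add_comm]
    refine sum_congr rfl fun j hj => ?_
    rw [mem_Ico] at hj
    congr 1
    omega

theorem sum_range_add_add_one (f : ℕ → M) (i n : ℕ) :
    ∑ j ∈ range n, f (i + j + 1) = ∑ k ∈ Ico (i + 1) (i + 1 + n), f k := by
  rw [range_eq_Ico, ← sum_Ico_add_right_sub_eq (c := i + 1), zero_add, add_comm n]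
  refine sum_congr rfl fun j hj => ?_
  rw [mem_Ico] at hj
  congr 1
  omega

theorem sum_range_two_mul_sub_one_sub_sub (f : ℕ → M) {i n : ℕ} (hi : i < n) :
    ∑ j ∈ range n, f (2 * n - 1 - i - j) = ∑ k ∈ Ico (n - i) (2 * n - i), f k := by
  rw [range_eq_Ico, sum_Ico_reflect _ _ (by omega)]
  congr 2 <;> omega

theorem sum_Ico_eq_sum_Icc_of_eq_zero {f : ℕ → M} {l : ℕ} (hf : ∀ k, l < k → f k = 0)
    (a : ℕ) {m : ℕ} (hm : l < m) : ∑ k ∈ Ico a m, f k = ∑ k ∈ Icc a l, f k := by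
  refine (sum_subset (fun k hk => ?_) fun k hk hk' => hf k ?_).symm
  · simp only [mem_Icc, mem_Ico] at hk ⊢
    omega
  · simp only [mem_Icc, mem_Ico] at hk hk'
    omega

end Finset

section LinftyOpNorm

attribute [local instance] Matrix.linftyOpNormedRing Matrix.linftyOpNormedAlgebra

theorem Matrix.norm_le_of_mem_spectrum_of_sum_norm_le {𝕜 ι : Type*}
    [NontriviallyNormedField 𝕜] [CompleteSpace 𝕜] [Fintype ι] [DecidableEq ι] [Nonempty ι]
    {A : Matrix ι ι 𝕜} {r : ℝ} (hA : ∀ i, ∑ j, ‖A i j‖ ≤ r) {μ : 𝕜} (hμ : μ ∈ spectrum 𝕜 A) :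
    ‖μ‖ ≤ r := by
  -- The local norm induces the product uniformity only up to unfolding, so instance search
  -- does not find completeness by itself.
  have : @CompleteSpace (Matrix ι ι 𝕜) PseudoMetricSpace.toUniformSpace :=
    FiniteDimensional.complete 𝕜 (Matrix ι ι 𝕜)
  refine (spectrum.norm_le_norm_of_mem hμ).trans ?_
  have hr : 0 ≤ r := (sum_nonneg fun j _ => norm_nonneg _).trans (hA (Classical.arbitrary ι))
  rw [linfty_opNorm_def, ← Real.coe_toNNReal r hr, NNReal.coe_le_coe, Finset.sup_le_iff]
  intro i _
  rw [← NNReal.coe_le_coe, Real.coe_toNNReal r hr, NNReal.coe_sum]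
  exact hA i

end LinftyOpNorm

theorem Matrix.IsSymm.im_eq_zero_of_mem_spectrum_map_ofReal {ι : Type*} [Fintype ι]
    [DecidableEq ι] {A : Matrix ι ι ℝ} (hA : A.IsSymm) {μ : ℂ}
    (hμ : μ ∈ spectrum ℂ (A.map (fun x : ℝ => (x : ℂ)))) : μ.im = 0 := by
  have hH : (A.map (fun x : ℝ => (x : ℂ))).IsHermitian :=
    (Matrix.isHermitian_iff_isSymm.mpr hA).map _ fun x => (Complex.conj_ofReal x).symm
  rw [hH.spectrum_eq_image_range] at hμ
  obtain ⟨t, -, rfl⟩ := hμ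
  simp

section ReflectiveMatrix

variable {α : Type*}

/-- Indices are 0-based: entry `(i, j)` is the paper's `[T + H^R]_{i+1, j+1}`. -/
def reflectiveMatrix [Add α] (n : ℕ) (w : ℕ → α) : Matrix (Fin n) (Fin n) α :=
  Matrix.of fun i j => w ((i : ℤ) - j).natAbs + (w (i + j + 1) + w (2 * n - 1 - i - j))

theorem reflectiveMatrix_isSymm [Add α] (n : ℕ) (w : ℕ → α) : (reflectiveMatrix n w).IsSymm :=
  Matrix.IsSymm.ext fun i j => by
    simp only [reflectiveMatrix, Matrix.of_apply]
    rw [← neg_sub, Int.natAbs_neg, add_comm (j : ℕ), Nat.sub_right_comm _ (j : ℕ)]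

theorem sum_reflectiveMatrix_apply [AddCommMonoid α] {n l : ℕ} {w : ℕ → α}
    (hw : ∀ k, l < k → w k = 0) (hln : l < n) (i : Fin n) :
    ∑ j, reflectiveMatrix n w i j = ∑ k ∈ Icc 0 l, w k + ∑ k ∈ Icc 1 l, w k := by
  simp only [reflectiveMatrix, Matrix.of_apply]
  rw [Fin.sum_univ_eq_sum_range (fun j => w ((i : ℤ) - j).natAbs
      + (w (i + j + 1) + w (2 * n - 1 - i - j))), sum_add_distrib, sum_add_distrib,
    sum_range_natAbs_sub _ i.2, sum_range_add_add_one, sum_range_two_mul_sub_one_sub_sub _ i.2,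
    add_add_add_comm, range_eq_Ico, sum_Ico_consecutive _ (Nat.zero_le _) (by omega),
    sum_Ico_consecutive _ (by omega) (by omega), sum_Ico_eq_sum_Icc_of_eq_zero hw 0 (by omega),
    sum_Ico_eq_sum_Icc_of_eq_zero hw 1 (by omega)]

end ReflectiveMatrix

theorem stmt_6_general (n l : ℕ) (hn : 2 ≤ n) (w : ℕ → ℝ)
    (hln : l ≤ (n - 1) / 2)
    (hpos : ∀ j, j ≤ l → 0 < w j)
    (hzero : ∀ k, l < k → w k = 0)
    (hsum : w 0 + 2 * ∑ j ∈ Finset.Icc 1 l, w j = 1)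
    (W : Matrix (Fin n) (Fin n) ℝ)
    (hW : ∀ i j : Fin n, W i j =
      w ((i.val : ℤ) - (j.val : ℤ)).natAbs
        + (w (i.val + j.val + 1) + w (2 * n - 1 - i.val - j.val))) :
    W.IsSymm ∧
    (⨆ i : Fin n, ∑ j : Fin n, |W i j|) = 1 ∧
    ∀ μ : ℂ, μ ∈ spectrum ℂ (W.map (fun x : ℝ => (x : ℂ))) →
      μ.im = 0 ∧ -1 ≤ μ.re ∧ μ.re ≤ 1 := by
  obtain rfl : W = reflectiveMatrix n w := Matrix.ext hW
  have : Nonempty (Fin n) := ⟨⟨0, by omega⟩⟩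
  have hw : ∀ k, 0 ≤ w k := fun k =>
    (le_or_gt k l).elim (fun hk => (hpos k hk).le) fun hk => (hzero k hk).ge
  have hrow : ∀ i, ∑ j, |reflectiveMatrix n w i j| = 1 := fun i => by
    have hentry : ∀ j, 0 ≤ reflectiveMatrix n w i j := fun j =>
      add_nonneg (hw _) (add_nonneg (hw _) (hw _))
    rw [sum_congr rfl fun j _ => abs_of_nonneg (hentry j),
      sum_reflectiveMatrix_apply hzero (by omega) i,
      ← insert_Icc_add_one_left_eq_Icc (Nat.zero_le l), sum_insert (by simp), zero_add]
    linarith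
  refine ⟨reflectiveMatrix_isSymm n w, by simp only [hrow, ciSup_const], fun μ hμ => ?_⟩
  have hμ1 : ‖μ‖ ≤ 1 := Matrix.norm_le_of_mem_spectrum_of_sum_norm_le
    (fun i => by
      simp only [Matrix.map_apply, Complex.norm_real, Real.norm_eq_abs, hrow, le_refl]) hμ
  exact ⟨(reflectiveMatrix_isSymm n w).im_eq_zero_of_mem_spectrum_map_ofReal hμ,
    abs_le.mp ((Complex.abs_re_le_norm μ).trans hμ1)⟩

/-- The Reflective matrix `W^R = T + H^R` built from a symmetric
filter is symmetric, its ∞-operator norm (maximum absolute row sum) equals 1,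
and every eigenvalue of it is real and lies in `[-1, 1]`. -/
theorem stmt_6 (n l : ℕ) (hn : 2 ≤ n) (w : ℕ → ℝ)
    (hl : 0 < l) (hln : l ≤ (n - 1) / 2)
    (hpos : ∀ j, j ≤ l → 0 < w j)
    (hzero : ∀ k, l < k → w k = 0)
    (hsum : w 0 + 2 * ∑ j ∈ Finset.Icc 1 l, w j = 1)
    (W : Matrix (Fin n) (Fin n) ℝ)
    (hW : ∀ i j : Fin n, W i j =
      w ((i.val : ℤ) - (j.val : ℤ)).natAbs
        + (w (i.val + j.val + 1) + w (2 * n - 1 - i.val - j.val))) :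
    W.IsSymm ∧
    (⨆ i : Fin n, ∑ j : Fin n, |W i j|) = 1 ∧
    ∀ μ : ℂ, μ ∈ spectrum ℂ (W.map (fun x : ℝ => (x : ℂ))) →
      μ.im = 0 ∧ -1 ≤ μ.re ∧ μ.re ≤ 1 :=
  stmt_6_general n l hn w hln hpos hzero hsum W hW
end

section
/- Let n ≥ 3 and let w_0, w_1, …, w_l be a symmetric decreasing filter of length l (0 < l ≤ ⌊(n−1)/2⌋), i.e. additionally w_0 ≥ w_1 ≥ … ≥ w_l, with w_k = 0 for k > l. Let W^AR ∈ ℝ^{n×n} be the Anti-Reflective matrix built from it. Then all entries of W^AR are nonnegative, every row of W^AR sums to 1 (so its ∞-operator norm equals 1), and every eigenvalue of W^AR lies in the closed complex unit disc; in particular every real eigenvalue of W^AR lies in [−1, 1]. -/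
open Finset

section Sums

variable {M : Type*} [AddCommMonoid M]

theorem sum_Ico_eq_sum_Ico_of_eq_zero {f : ℕ → M} {l : ℕ} (hf : ∀ k, l < k → f k = 0)
    (a : ℕ) {b c : ℕ} (hb : l < b) (hc : l < c) :
    ∑ k ∈ Ico a b, f k = ∑ k ∈ Ico a c, f k := by
  wlog hbc : b ≤ c generalizing b c
  · exact (this hc hb (le_of_not_ge hbc)).symm
  refine sum_subset (Ico_subset_Ico_right hbc) fun k hk hkb => hf k ?_
  simp only [mem_Ico, not_and, not_lt] at hk hkb
  omega

theorem sum_Icc_eq_sum_Ico_of_eq_zero {f : ℕ → M} {l : ℕ} (hf : ∀ k, l < k → f k = 0)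
    (a : ℕ) {c : ℕ} (hc : l < c) :
    ∑ k ∈ Icc a l, f k = ∑ k ∈ Ico a c, f k := by
  rw [← Ico_add_one_right_eq_Icc]
  exact sum_Ico_eq_sum_Ico_of_eq_zero hf a (Nat.lt_succ_self l) hc

theorem sum_Ico_add_add_sum_Ico (f : ℕ → M) {a m b : ℕ} (ham : a ≤ m) (hmb : m < b) :
    ∑ k ∈ Ico a m, f k + f m + ∑ k ∈ Ico (m + 1) b, f k = ∑ k ∈ Ico a b, f k := by
  rw [add_assoc, ← sum_eq_sum_Ico_succ_bot hmb, sum_Ico_consecutive f ham hmb.le]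

theorem sum_range_eq_add_sum_Ico_add (f : ℕ → M) {n : ℕ} (hn : 2 ≤ n) :
    ∑ j ∈ range n, f j = f 0 + ∑ j ∈ Ico 1 (n - 1), f j + f (n - 1) := by
  rw [range_eq_Ico, sum_eq_sum_Ico_succ_bot (by omega), add_assoc, ← sum_Ico_succ_top (by omega),
    Nat.sub_add_cancel (by omega)]

theorem sum_Ico_natAbs_sub (f : ℕ → M) {a c : ℕ} (ha : 1 ≤ a) (hac : a < c) :
    ∑ j ∈ Ico 1 c, f ((a : ℤ) - j).natAbs
      = ∑ k ∈ Ico 1 a, f k + f 0 + ∑ k ∈ Ico 1 (c - a), f k := by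
  rw [← sum_Ico_consecutive _ ha hac.le, add_assoc]
  congr 1
  · have hreflect : ∑ j ∈ Ico 1 a, f (a - j) = ∑ k ∈ Ico 1 a, f k := by
      rw [sum_Ico_reflect f 1 (Nat.le_succ a), Nat.add_sub_cancel_left, Nat.add_sub_cancel]
    rw [← hreflect]
    refine sum_congr rfl fun j hj => congrArg f ?_
    simp only [mem_Ico] at hj
    omega
  · rw [sum_Ico_eq_sum_range, range_eq_Ico, sum_eq_sum_Ico_succ_bot (by omega)]
    congr 1
    · simp
    · exact sum_congr rfl fun k _ => congrArg f (by omega)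

end Sums

section Filter

variable {w : ℕ → ℝ} {n l : ℕ}

theorem antitone_of_nonneg_of_eq_zero (hnonneg : ∀ j, j ≤ l → 0 ≤ w j)
    (hdec : ∀ i j, i ≤ j → j ≤ l → w j ≤ w i) (hzero : ∀ k, l < k → w k = 0) : Antitone w := by
  intro i j hij
  by_cases hj : j ≤ l
  · exact hdec i j hij hj
  · rw [hzero j (by omega)]
    by_cases hi : i ≤ l
    · exact hnonneg i hi
    · exact (hzero i (by omega)).ge

theorem nonneg_of_antitone_of_eq_zero (hw : Antitone w) (hzero : ∀ k, l < k → w k = 0) (k : ℕ) :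
    0 ≤ w k :=
  (hzero (k + l + 1) (by omega)).symm.le.trans (hw (by omega))

theorem add_reflect_le_natAbs_sub (hw : Antitone w) (hzero : ∀ k, l < k → w k = 0)
    (hln : l + 2 ≤ n) {a b : ℕ} (ha : a < n) (hb : b < n) :
    w (a + b) + w (2 * n - 2 - a - b) ≤ w ((a : ℤ) - b).natAbs := by
  rcases le_or_gt (a + b) l with hab | hab
  · rw [hzero (2 * n - 2 - a - b) (by omega), add_zero]
    exact hw (by omega)
  · rw [hzero (a + b) hab, zero_add]
    exact hw (by omega)

theorem antiReflective_interior_row_sum (hzero : ∀ k, l < k → w k = 0) (hln : l < n) {a : ℕ}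
    (ha : 1 ≤ a) (han : a + 2 ≤ n) :
    (2 * ∑ k ∈ Icc (a + 1) l, w k + w a)
      + ∑ j ∈ Ico 1 (n - 1), (w ((a : ℤ) - j).natAbs - (w (a + j) + w (2 * n - 2 - a - j)))
      + (2 * ∑ k ∈ Icc (n - a) l, w k + w (n - 1 - a))
      = w 0 + 2 * ∑ k ∈ Icc 1 l, w k := by
  have hToeplitz := sum_Ico_natAbs_sub w ha (by omega : a < n - 1)
  have hHankel₁ : ∑ j ∈ Ico 1 (n - 1), w (a + j) = ∑ k ∈ Ico (a + 1) n, w k := by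
    rw [sum_Ico_add, add_comm 1 a]
    exact sum_Ico_eq_sum_Ico_of_eq_zero hzero _ (by omega) hln
  have hHankel₂ : ∑ j ∈ Ico 1 (n - 1), w (2 * n - 2 - a - j) = ∑ k ∈ Ico (n - a) n, w k := by
    rw [sum_Ico_reflect w 1 (by omega), show 2 * n - 2 - a + 1 - (n - 1) = n - a by omega]
    exact sum_Ico_eq_sum_Ico_of_eq_zero hzero _ (by omega) hln
  have hleft := sum_Ico_add_add_sum_Ico w ha (by omega : a < n)
  have hright := sum_Ico_add_add_sum_Ico w (by omega : 1 ≤ n - 1 - a) (by omega : n - 1 - a < n)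
  rw [show n - 1 - a + 1 = n - a by omega] at hright
  rw [sum_sub_distrib, sum_add_distrib, hToeplitz, hHankel₁, hHankel₂,
    sum_Icc_eq_sum_Ico_of_eq_zero hzero _ hln, sum_Icc_eq_sum_Ico_of_eq_zero hzero _ hln,
    sum_Icc_eq_sum_Ico_of_eq_zero hzero _ hln]
  linarith

end Filter

theorem Matrix.sum_abs_row_of_mem_rowStochastic {ι R : Type*} [Fintype ι] [DecidableEq ι]
    [Ring R] [LinearOrder R] [IsOrderedRing R] {M : Matrix ι ι R}
    (hM : M ∈ Matrix.rowStochastic R ι) (i : ι) : ∑ j, |M i j| = 1 := by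
  simp only [abs_of_nonneg (Matrix.nonneg_of_mem_rowStochastic hM),
    Matrix.sum_row_of_mem_rowStochastic hM]

theorem Matrix.norm_le_of_mem_spectrum {ι K : Type*} [Fintype ι] [DecidableEq ι] [NormedField K]
    {A : Matrix ι ι K} {r : ℝ} (hA : ∀ i, ∑ j, ‖A i j‖ ≤ r) {μ : K} (hμ : μ ∈ spectrum K A) :
    ‖μ‖ ≤ r := by
  rw [← Matrix.spectrum_toLin', ← Module.End.hasEigenvalue_iff_mem_spectrum] at hμ
  obtain ⟨k, hk⟩ := eigenvalue_mem_ball hμ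
  rw [mem_closedBall_iff_norm] at hk
  calc ‖μ‖ ≤ ‖μ - A k k‖ + ‖A k k‖ := norm_le_norm_sub_add μ (A k k)
    _ ≤ ∑ j ∈ univ.erase k, ‖A k j‖ + ‖A k k‖ := by gcongr
    _ = ∑ j, ‖A k j‖ := sum_erase_add _ _ (mem_univ k)
    _ ≤ r := hA k

section AntiReflective

variable {w : ℕ → ℝ} {n l : ℕ}

theorem antiReflectiveMatrix_nonneg (hw : Antitone w) (hzero : ∀ k, l < k → w k = 0)
    (hln : l ≤ (n - 1) / 2) (i j : Fin n) : 0 ≤ antiReflectiveMatrix n l w i j := by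
  have hw₀ := nonneg_of_antitone_of_eq_zero hw hzero
  have hsum₀ (a : ℕ) : 0 ≤ ∑ k ∈ Icc a l, w k := sum_nonneg fun k _ => hw₀ k
  have hi := i.isLt
  have hj := j.isLt
  simp only [antiReflectiveMatrix, Matrix.of_apply]
  split_ifs
  any_goals exact le_rfl
  any_goals exact add_nonneg (mul_nonneg zero_le_two (hsum₀ _)) (hw₀ _)
  exact sub_nonneg.2 (add_reflect_le_natAbs_sub hw hzero (by omega) hi hj)

theorem sum_antiReflectiveMatrix_row (hzero : ∀ k, l < k → w k = 0) (hln : l ≤ (n - 1) / 2)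
    (hsum : w 0 + 2 * ∑ j ∈ Icc 1 l, w j = 1) (i : Fin n) :
    ∑ j, antiReflectiveMatrix n l w i j = 1 := by
  have hi := i.isLt
  simp only [antiReflectiveMatrix, Matrix.of_apply]
  split_ifs with hfirst hlast
  · rw [Fin.sum_univ_eq_sum_range (fun m => if m = 0 then _ else 0), sum_ite_eq',
      if_pos (mem_range.2 (by omega))]
    linarith
  · rw [Fin.sum_univ_eq_sum_range (fun m => if m = n - 1 then _ else 0), sum_ite_eq',
      if_pos (mem_range.2 (by omega))]
    linarith
  · rw [Fin.sum_univ_eq_sum_range (fun m => if m = 0 then _ else if m = n - 1 then _ else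
        w ((i : ℤ) - m).natAbs - (w (i + m) + w (2 * n - 2 - i - m))),
      sum_range_eq_add_sum_Ico_add _ (by omega), if_pos rfl, if_neg (by omega), if_pos rfl,
      sum_ite_of_false fun m hm => Nat.one_le_iff_ne_zero.1 (mem_Ico.1 hm).1,
      sum_ite_of_false fun m hm => (mem_Ico.1 hm).2.ne,
      antiReflective_interior_row_sum hzero (by omega) (by omega) (by omega), hsum]

theorem antiReflectiveMatrix_mem_rowStochastic (hw : Antitone w)
    (hzero : ∀ k, l < k → w k = 0) (hln : l ≤ (n - 1) / 2)
    (hsum : w 0 + 2 * ∑ j ∈ Icc 1 l, w j = 1) :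
    antiReflectiveMatrix n l w ∈ Matrix.rowStochastic ℝ (Fin n) :=
  Matrix.mem_rowStochastic_iff_sum.2
    ⟨antiReflectiveMatrix_nonneg hw hzero hln, sum_antiReflectiveMatrix_row hzero hln hsum⟩

end AntiReflective

theorem stmt_7_general (n l : ℕ) (hn : 3 ≤ n)
    (hln : l ≤ (n - 1) / 2) (w : ℕ → ℝ)
    (hpos : ∀ j, j ≤ l → 0 < w j)
    (hdec : ∀ i j, i ≤ j → j ≤ l → w j ≤ w i)
    (hzero : ∀ k, l < k → w k = 0)
    (hsum : w 0 + 2 * ∑ j ∈ Finset.Icc 1 l, w j = 1) :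
    (∀ i j : Fin n, 0 ≤ antiReflectiveMatrix n l w i j) ∧
    (∀ i : Fin n, ∑ j : Fin n, antiReflectiveMatrix n l w i j = 1) ∧
    (⨆ i : Fin n, ∑ j : Fin n, |antiReflectiveMatrix n l w i j|) = 1 ∧
    (∀ μ : ℂ, μ ∈ spectrum ℂ ((antiReflectiveMatrix n l w).map (fun x : ℝ => (x : ℂ))) →
      ‖μ‖ ≤ 1) ∧
    (∀ μ : ℝ, μ ∈ spectrum ℝ (antiReflectiveMatrix n l w) → -1 ≤ μ ∧ μ ≤ 1) := by
  have hW := antiReflectiveMatrix_mem_rowStochastic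
    (antitone_of_nonneg_of_eq_zero (fun j hj => (hpos j hj).le) hdec hzero) hzero hln hsum
  have hrow := Matrix.sum_abs_row_of_mem_rowStochastic hW
  have : Nonempty (Fin n) := ⟨⟨0, by omega⟩⟩
  refine ⟨fun i j => Matrix.nonneg_of_mem_rowStochastic hW, Matrix.sum_row_of_mem_rowStochastic hW,
    by simp only [hrow, ciSup_const], fun μ hμ => Matrix.norm_le_of_mem_spectrum (fun i => ?_) hμ,
    fun μ hμ => abs_le.1 (Matrix.norm_le_of_mem_spectrum (fun i => (hrow i).le) hμ)⟩
  simp only [Matrix.map_apply, Complex.norm_real, Real.norm_eq_abs, hrow, le_refl]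

/-- For a symmetric *decreasing* filter, the Anti-Reflective matrix
`W^AR` has nonnegative entries, each of its rows sums to 1 (so its ∞-operator norm
equals 1), every eigenvalue lies in the closed complex unit disc, and in particular
every real eigenvalue lies in `[-1, 1]`. -/
theorem stmt_7 (n l : ℕ) (hn : 3 ≤ n)
    (hl : 0 < l) (hln : l ≤ (n - 1) / 2) (w : ℕ → ℝ)
    (hpos : ∀ j, j ≤ l → 0 < w j)
    (hdec : ∀ i j, i ≤ j → j ≤ l → w j ≤ w i)
    (hzero : ∀ k, l < k → w k = 0)
    (hsum : w 0 + 2 * ∑ j ∈ Finset.Icc 1 l, w j = 1) :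
    (∀ i j : Fin n, 0 ≤ antiReflectiveMatrix n l w i j) ∧
    (∀ i : Fin n, ∑ j : Fin n, antiReflectiveMatrix n l w i j = 1) ∧
    (⨆ i : Fin n, ∑ j : Fin n, |antiReflectiveMatrix n l w i j|) = 1 ∧
    (∀ μ : ℂ, μ ∈ spectrum ℂ ((antiReflectiveMatrix n l w).map (fun x : ℝ => (x : ℂ))) →
      ‖μ‖ ≤ 1) ∧
    (∀ μ : ℝ, μ ∈ spectrum ℝ (antiReflectiveMatrix n l w) → -1 ≤ μ ∧ μ ≤ 1) :=
  stmt_7_general n l hn hln w hpos hdec hzero hsum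
end

section
/- Let n ≥ 2 and let v_0, v_1, …, v_{l'} be a symmetric filter of length l' (0 < l' ≤ ⌊(n−1)/4⌋), and let w = v ∗ v be its autoconvolution, i.e. w_j = ∑_{k∈ℤ} v_{|k|} v_{|j−k|} for 0 ≤ j ≤ 2l' (a symmetric filter of length 2l' ≤ ⌊(n−1)/2⌋). Let W^R(w) and V^R := W^R(v) be the Reflective matrices built from w and v respectively. Then W^R(w) = (V^R)², i.e. the Reflective matrix of the convolved filter equals the square of the Reflective matrix of the original filter. -/
/-- If `w = v ∗ v` is the autoconvolution of a symmetric filter `v`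
of length `l' ≤ ⌊(n-1)/4⌋` (filters extended symmetrically to ℤ via `k ↦ v |k|`),
then the Reflective matrix built from `w` is the square of the Reflective matrix
built from `v`: `W^R(w) = (V^R)²`. -/
theorem stmt_8 (n l' : ℕ) (hn : 2 ≤ n) (v : ℕ → ℝ)
    (hl' : 0 < l') (hl'n : l' ≤ (n - 1) / 4)
    (hpos : ∀ j, j ≤ l' → 0 < v j)
    (hzero : ∀ k, l' < k → v k = 0)
    (hsum : v 0 + 2 * ∑ j ∈ Finset.Icc 1 l', v j = 1)
    (w : ℕ → ℝ)
    (hw : ∀ j : ℕ, w j = ∑' k : ℤ, v k.natAbs * v ((j : ℤ) - k).natAbs)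
    (Ww Vv : Matrix (Fin n) (Fin n) ℝ)
    (hWw : ∀ i j : Fin n, Ww i j =
      w ((i.val : ℤ) - (j.val : ℤ)).natAbs
        + (w (i.val + j.val + 1) + w (2 * n - 1 - i.val - j.val)))
    (hVv : ∀ i j : Fin n, Vv i j =
      v ((i.val : ℤ) - (j.val : ℤ)).natAbs
        + (v (i.val + j.val + 1) + v (2 * n - 1 - i.val - j.val))) :
    Ww = Vv * Vv := by
  have hn4 : 4 * l' + 1 ≤ n := by omega
  have hz : ∀ m : ℤ, (l' : ℤ) < m.natAbs → v m.natAbs = 0 := fun m hm =>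
    hzero _ (by exact_mod_cast hm)
  -- finite formula for w
  have hw' : ∀ c : ℤ, w c.natAbs
      = ∑ m ∈ Finset.Icc (-(l' : ℤ)) l', v m.natAbs * v (c - m).natAbs := by
    intro c
    have hsupp : ∀ m : ℤ, m ∉ Finset.Icc (-(l' : ℤ)) l' →
        v m.natAbs * v (c - m).natAbs = 0 := by
      intro m hm
      rw [Finset.mem_Icc] at hm
      have : v m.natAbs = 0 := hz m (by omega)
      rw [this, zero_mul]
    rcases le_or_gt 0 c with hc | hc
    · have h1 : ((c.natAbs : ℤ)) = c := Int.natAbs_of_nonneg hc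
      rw [hw, h1, tsum_eq_sum hsupp]
    · have h1 : ((c.natAbs : ℤ)) = -c := by omega
      rw [hw, h1]
      have h2 : ∑' k : ℤ, v k.natAbs * v (-c - k).natAbs
          = ∑' k : ℤ, v k.natAbs * v (c - k).natAbs := by
        rw [← (Equiv.neg ℤ).tsum_eq (fun k : ℤ => v k.natAbs * v (c - k).natAbs)]
        apply tsum_congr
        intro k
        simp only [Equiv.neg_apply]
        rw [show (-k).natAbs = k.natAbs by omega,
          show (c - -k).natAbs = (-c - k).natAbs by omega]
      rw [h2, tsum_eq_sum hsupp]
  -- shifted finite formula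
  have hconv : ∀ a b : ℤ, w (a - b).natAbs
      = ∑ m ∈ Finset.Icc (a - l') (a + l'), v (a - m).natAbs * v (m - b).natAbs := by
    intro a b
    rw [hw' (a - b)]
    refine Finset.sum_nbij' (fun m => a - m) (fun m => a - m) ?_ ?_ ?_ ?_ ?_
    · intro x hx; rw [Finset.mem_Icc] at hx ⊢; omega
    · intro x hx; rw [Finset.mem_Icc] at hx ⊢; omega
    · intro x _; omega
    · intro x _; omega
    · intro x _
      rw [show (a - (a - x)).natAbs = x.natAbs by omega,
        show ((a - x) - b).natAbs = (a - b - x).natAbs by omega]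
  -- sums over the big window
  have hbig : ∀ (i : Fin n) (b : ℤ),
      ∑ m ∈ Finset.Icc (-(n : ℤ)) (2 * n - 1),
          v ((i.val : ℤ) - m).natAbs * v (m - b).natAbs
        = w ((i.val : ℤ) - b).natAbs := by
    intro i b
    have hi := i.isLt
    rw [hconv ((i.val : ℤ)) b]
    symm
    apply Finset.sum_subset
    · apply Finset.Icc_subset_Icc <;> omega
    · intro x hx hx'
      rw [Finset.mem_Icc] at hx hx'
      have : v ((i.val : ℤ) - x).natAbs = 0 := hz _ (by omega)
      rw [this, zero_mul]
  ext i k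
  have hi := i.isLt
  have hk := k.isLt
  rw [Matrix.mul_apply, hWw]
  -- the folded kernel as a function on ℤ
  set f : ℤ → ℝ := fun m => v ((i.val : ℤ) - m).natAbs *
      (v (m - (k.val : ℤ)).natAbs + v (m + k.val + 1).natAbs
        + v (2 * (n : ℤ) - 1 - m - k.val).natAbs) with hf
  -- step 1 : the matrix product as a sum over the big window
  have step1 : ∑ j, Vv i j * Vv j k = ∑ m ∈ Finset.Icc (-(n : ℤ)) (2 * n - 1), f m := by
    have hsplitset : Finset.Icc (-(n : ℤ)) (2 * n - 1)
        = (Finset.Icc (-(n : ℤ)) (-1) ∪ Finset.Icc (0 : ℤ) (n - 1))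
            ∪ Finset.Icc (n : ℤ) (2 * n - 1) := by
      ext x
      simp only [Finset.mem_Icc, Finset.mem_union]
      omega
    have hd1 : Disjoint (Finset.Icc (-(n : ℤ)) (-1)) (Finset.Icc (0 : ℤ) (n - 1)) := by
      rw [Finset.disjoint_left]; intro a ha ha'
      rw [Finset.mem_Icc] at ha ha'; omega
    have hd2 : Disjoint (Finset.Icc (-(n : ℤ)) (-1) ∪ Finset.Icc (0 : ℤ) (n - 1))
        (Finset.Icc (n : ℤ) (2 * n - 1)) := by
      rw [Finset.disjoint_left]; intro a ha ha'
      rw [Finset.mem_union, Finset.mem_Icc, Finset.mem_Icc] at ha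
      rw [Finset.mem_Icc] at ha'; omega
    rw [hsplitset, Finset.sum_union hd2, Finset.sum_union hd1]
    have e1 : ∑ m ∈ Finset.Icc (-(n : ℤ)) (-1), f m
        = ∑ j ∈ Finset.range n, f (-1 - (j : ℤ)) := by
      refine Finset.sum_nbij' (fun m => (-1 - m).toNat) (fun j => -1 - (j : ℤ))
        ?_ ?_ ?_ ?_ ?_
      · intro x hx; rw [Finset.mem_Icc] at hx; rw [Finset.mem_range]; omega
      · intro x hx; rw [Finset.mem_range] at hx; rw [Finset.mem_Icc]; omega
      · intro x hx; rw [Finset.mem_Icc] at hx; omega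
      · intro x hx; rw [Finset.mem_range] at hx; omega
      · intro x hx; rw [Finset.mem_Icc] at hx
        congr 1; omega
    have e2 : ∑ m ∈ Finset.Icc (0 : ℤ) (n - 1), f m
        = ∑ j ∈ Finset.range n, f (j : ℤ) := by
      refine Finset.sum_nbij' (fun m => m.toNat) (fun j => (j : ℤ)) ?_ ?_ ?_ ?_ ?_
      · intro x hx; rw [Finset.mem_Icc] at hx; rw [Finset.mem_range]; omega
      · intro x hx; rw [Finset.mem_range] at hx; rw [Finset.mem_Icc]; omega
      · intro x hx; rw [Finset.mem_Icc] at hx; omega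
      · intro x hx; rw [Finset.mem_range] at hx; omega
      · intro x hx; rw [Finset.mem_Icc] at hx
        congr 1; omega
    have e3 : ∑ m ∈ Finset.Icc (n : ℤ) (2 * n - 1), f m
        = ∑ j ∈ Finset.range n, f (2 * (n : ℤ) - 1 - j) := by
      refine Finset.sum_nbij' (fun m => (2 * (n : ℤ) - 1 - m).toNat)
        (fun j => 2 * (n : ℤ) - 1 - (j : ℤ)) ?_ ?_ ?_ ?_ ?_
      · intro x hx; rw [Finset.mem_Icc] at hx; rw [Finset.mem_range]; omega
      · intro x hx; rw [Finset.mem_range] at hx; rw [Finset.mem_Icc]; omega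
      · intro x hx; rw [Finset.mem_Icc] at hx; omega
      · intro x hx; rw [Finset.mem_range] at hx; omega
      · intro x hx; rw [Finset.mem_Icc] at hx
        congr 1; omega
    rw [e1, e2, e3, ← Finset.sum_add_distrib, ← Finset.sum_add_distrib]
    -- now match with the Fin sum
    rw [show (∑ j, Vv i j * Vv j k) = ∑ j : Fin n,
        ((v ((i.val : ℤ) - (j.val : ℤ)).natAbs
          + (v (i.val + j.val + 1) + v (2 * n - 1 - i.val - j.val)))
        * (v ((j.val : ℤ) - (k.val : ℤ)).natAbs
          + (v (j.val + k.val + 1) + v (2 * n - 1 - j.val - k.val))))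
      from Finset.sum_congr rfl (fun j _ => by rw [hVv, hVv]),
      Fin.sum_univ_eq_sum_range (fun j =>
        ((v ((i.val : ℤ) - (j : ℤ)).natAbs
          + (v (i.val + j + 1) + v (2 * n - 1 - i.val - j)))
        * (v ((j : ℤ) - (k.val : ℤ)).natAbs
          + (v (j + k.val + 1) + v (2 * n - 1 - j - k.val)))))]
    apply Finset.sum_congr rfl
    intro j hj
    rw [Finset.mem_range] at hj
    simp only [hf]
    -- natAbs normalizations
    rw [show ((i.val : ℤ) - (-1 - (j : ℤ))).natAbs = i.val + j + 1 by omega]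
    rw [show ((i.val : ℤ) - (2 * (n : ℤ) - 1 - (j : ℤ))).natAbs = 2 * n - 1 - i.val - j by omega]
    rw [show ((j : ℤ) + (k.val : ℤ) + 1).natAbs = j + k.val + 1 by omega]
    rw [show (2 * (n : ℤ) - 1 - (j : ℤ) - (k.val : ℤ)).natAbs = 2 * n - 1 - j - k.val by omega]
    rw [show ((-1 - (j : ℤ)) - (k.val : ℤ)).natAbs = j + k.val + 1 by omega]
    rw [show ((-1 - (j : ℤ)) + (k.val : ℤ) + 1).natAbs = ((j : ℤ) - (k.val : ℤ)).natAbs by omega]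
    rw [show (2 * (n : ℤ) - 1 - (-1 - (j : ℤ)) - (k.val : ℤ)).natAbs = 2 * n + j - k.val by omega]
    rw [show ((2 * (n : ℤ) - 1 - (j : ℤ)) + (k.val : ℤ) + 1).natAbs = 2 * n + k.val - j by omega]
    rw [show (2 * (n : ℤ) - 1 - (2 * (n : ℤ) - 1 - (j : ℤ)) - (k.val : ℤ)).natAbs
        = ((j : ℤ) - (k.val : ℤ)).natAbs by omega]
    -- key vanishing facts
    have key1 : v (i.val + j + 1) * v (2 * n + j - k.val)
        = v (i.val + j + 1) * v (2 * n - 1 - j - k.val) := by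
      rcases le_or_gt (i.val + j + 1) l' with h | h
      · rw [hzero (2 * n + j - k.val) (by omega), hzero (2 * n - 1 - j - k.val) (by omega)]
      · rw [hzero _ h, zero_mul, zero_mul]
    have key2 : v (2 * n - 1 - i.val - j) * v (2 * n + k.val - j)
        = v (2 * n - 1 - i.val - j) * v (j + k.val + 1) := by
      rcases le_or_gt (2 * n - 1 - i.val - j) l' with h | h
      · rw [hzero (2 * n + k.val - j) (by omega), hzero (j + k.val + 1) (by omega)]
      · rw [hzero _ h, zero_mul, zero_mul]
    nlinarith [key1, key2]
  rw [step1]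
  -- step 2 : split the big sum into three convolutions
  have expand : ∀ m : ℤ, f m
      = v ((i.val : ℤ) - m).natAbs * v (m - (k.val : ℤ)).natAbs
        + v ((i.val : ℤ) - m).natAbs * v (m - (-(k.val : ℤ) - 1)).natAbs
        + v ((i.val : ℤ) - m).natAbs * v (m - (2 * (n : ℤ) - 1 - k.val)).natAbs := by
    intro m
    simp only [hf]
    rw [show (m - (-(k.val : ℤ) - 1)).natAbs = (m + (k.val : ℤ) + 1).natAbs by omega,
      show (m - (2 * (n : ℤ) - 1 - (k.val : ℤ))).natAbs
        = (2 * (n : ℤ) - 1 - m - (k.val : ℤ)).natAbs by omega]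
    ring
  rw [Finset.sum_congr rfl (fun m _ => expand m), Finset.sum_add_distrib,
    Finset.sum_add_distrib, hbig i (k.val : ℤ), hbig i (-(k.val : ℤ) - 1),
    hbig i (2 * (n : ℤ) - 1 - (k.val : ℤ))]
  rw [show ((i.val : ℤ) - (-(k.val : ℤ) - 1)).natAbs = i.val + k.val + 1 by omega,
    show ((i.val : ℤ) - (2 * (n : ℤ) - 1 - (k.val : ℤ))).natAbs
      = 2 * n - 1 - i.val - k.val by omega]
  ring
end

section
/- Let n ≥ 3 and let v_0, v_1, …, v_{l'} be a symmetric filter of length l' (0 < l' ≤ ⌊(n−1)/4⌋), and let w = v ∗ v be its autoconvolution, a symmetric filter of length 2l' ≤ ⌊(n−1)/2⌋. Let W^AR(w) and V^AR := W^AR(v) be the Anti-Reflective matrices built from w and v respectively. Then W^AR(w) = (V^AR)², i.e. the Anti-Reflective matrix of the convolved filter equals the square of the Anti-Reflective matrix of the original filter. -/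
open Finset

section Reindex

variable {M : Type*} [AddCommMonoid M]

lemma sum_Icc_reflect (g : ℤ → M) {a b c a' b' : ℤ} (ha : c - b = a') (hb : c - a = b') :
    ∑ p ∈ Icc a b, g (c - p) = ∑ q ∈ Icc a' b', g q := by
  subst ha hb
  exact sum_nbij' (c - ·) (c - ·) (fun x hx => by simp only [mem_Icc] at *; omega)
    (fun x hx => by simp only [mem_Icc] at *; omega) (fun _ _ => sub_sub_cancel c _)
    (fun _ _ => sub_sub_cancel c _) (fun _ _ => rfl)

lemma sum_Icc_shift (g : ℤ → M) {a b c a' b' : ℤ} (ha : a + c = a') (hb : b + c = b') :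
    ∑ p ∈ Icc a b, g (p + c) = ∑ q ∈ Icc a' b', g q := by
  subst ha hb
  rw [← map_add_right_Icc, sum_map]; rfl

lemma sum_Icc_natCast (g : ℤ → M) (a b : ℕ) :
    ∑ k ∈ Icc a b, g k = ∑ p ∈ Icc (a : ℤ) b, g p :=
  sum_nbij' (↑) Int.toNat (fun x hx => by simp only [mem_Icc] at *; omega)
    (fun x hx => by simp only [mem_Icc] at *; omega) (fun _ _ => Int.toNat_natCast _)
    (fun x hx => by simp only [mem_Icc] at hx; omega) (fun _ _ => rfl)

lemma sum_Icc_split (g : ℤ → M) {a b c : ℤ} (hab : a ≤ b + 1) (hbc : b ≤ c) :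
    ∑ p ∈ Icc a c, g p = ∑ p ∈ Icc a b, g p + ∑ p ∈ Icc (b + 1) c, g p := by
  rw [← sum_union (disjoint_left.2 fun x hx hx' => by simp only [mem_Icc] at hx hx'; omega)]
  congr 1; ext x; simp only [mem_union, mem_Icc]; omega

lemma sum_fin_eq_sum_Icc (n : ℕ) (g : ℤ → M) :
    ∑ j : Fin n, g j = ∑ p ∈ Icc (0 : ℤ) (n - 1), g p :=
  sum_bij' (fun j _ => (j : ℤ)) (fun p hp => ⟨p.toNat, by simp only [mem_Icc] at hp; omega⟩)
    (fun j _ => by simp only [mem_Icc]; omega) (fun _ _ => mem_univ _)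
    (fun j _ => by ext; simp) (fun p hp => by simp only [mem_Icc] at hp; simp; omega)
    (fun _ _ => rfl)

lemma sum_Icc_neg_natAbs {R : Type*} [CommSemiring R] (u : ℕ → R) (l : ℕ) :
    ∑ k ∈ Icc (-(l : ℤ)) l, u k.natAbs = u 0 + 2 * ∑ k ∈ Icc 1 l, u k := by
  induction l with
  | zero => simp
  | succ l ih =>
    have hIcc : Icc (-((l + 1 : ℕ) : ℤ)) (l + 1 : ℕ)
        = insert (-((l + 1 : ℕ) : ℤ)) (insert ((l + 1 : ℕ) : ℤ) (Icc (-(l : ℤ)) l)) := by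
      ext x; simp only [mem_insert, mem_Icc]; omega
    rw [hIcc, sum_insert (by simp; omega), sum_insert (by simp), ih, sum_Icc_succ_top (by omega)]
    simp only [Int.natAbs_neg, Int.natAbs_natCast]
    ring

end Reindex

noncomputable def symConv (u : ℕ → ℝ) (l : ℕ) (f : ℤ → ℝ) (t : ℤ) : ℝ :=
  ∑ k ∈ Icc (-(l : ℤ)) l, u k.natAbs * f (t - k)

def IsAntiReflectiveAt (f : ℤ → ℝ) (c : ℤ) (R : ℕ) : Prop :=
  ∀ t : ℤ, t.natAbs ≤ R → f (c - t) + f (c + t) = 2 * f c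

section SymConv

variable {u : ℕ → ℝ} {l : ℕ}

lemma symConv_eq_sum_of_subset (hu : ∀ k, l < k → u k = 0) {S : Finset ℤ}
    (hS : Icc (-(l : ℤ)) l ⊆ S) (f : ℤ → ℝ) (t : ℤ) :
    symConv u l f t = ∑ k ∈ S, u k.natAbs * f (t - k) :=
  sum_subset hS fun k _ hk => by
    rw [hu _ (by simp only [mem_Icc] at hk; omega), zero_mul]

lemma symConv_const (c : ℝ) (t : ℤ) :
    symConv u l (fun _ => c) t = (∑ k ∈ Icc (-(l : ℤ)) l, u k.natAbs) * c := by
  rw [symConv, sum_mul]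

lemma symConv_add_reflect (f : ℤ → ℝ) (t : ℤ) :
    symConv u l f t = ∑ k ∈ Icc (-(l : ℤ)) l, u k.natAbs * f (t + k) := by
  rw [symConv, ← sum_Icc_reflect (fun k => u k.natAbs * f (t + k)) (a := -l) (b := l) (c := 0)
    (by ring) (by ring)]
  simp only [zero_add, Int.natAbs_neg, sub_eq_add_neg]

lemma symConv_neg_of_even {f : ℤ → ℝ} (hf : ∀ t, f (-t) = f t) (t : ℤ) :
    symConv u l f (-t) = symConv u l f t := by
  rw [symConv_add_reflect, symConv]
  refine sum_congr rfl fun k _ => ?_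
  rw [← hf, neg_add, neg_neg, ← sub_eq_add_neg]

variable {f : ℤ → ℝ} {c : ℤ} {R : ℕ}

lemma IsAntiReflectiveAt.mono {R' : ℕ} (hf : IsAntiReflectiveAt f c R) (h : R' ≤ R) :
    IsAntiReflectiveAt f c R' :=
  fun t ht => hf t (ht.trans h)

lemma IsAntiReflectiveAt.symConv_sub_add_symConv (hf : IsAntiReflectiveAt f c (R + l))
    {t : ℤ} (ht : t.natAbs ≤ R) :
    symConv u l f (c - t) + symConv u l f (c + t)
      = 2 * (∑ k ∈ Icc (-(l : ℤ)) l, u k.natAbs) * f c := by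
  rw [symConv, symConv_add_reflect, ← sum_add_distrib, mul_comm 2, mul_assoc, sum_mul]
  refine sum_congr rfl fun k hk => ?_
  rw [mem_Icc] at hk
  have := hf (t + k) (by omega)
  rw [← mul_add, sub_sub, add_assoc, this]

lemma IsAntiReflectiveAt.symConv_self (hmass : ∑ k ∈ Icc (-(l : ℤ)) l, u k.natAbs = 1)
    (hf : IsAntiReflectiveAt f c l) : symConv u l f c = f c := by
  have h := (hf.mono (zero_add l).le).symConv_sub_add_symConv (u := u) (t := 0) le_rfl
  rw [sub_zero, add_zero, hmass] at h
  linarith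

lemma IsAntiReflectiveAt.symConv (hmass : ∑ k ∈ Icc (-(l : ℤ)) l, u k.natAbs = 1)
    (hf : IsAntiReflectiveAt f c (R + l)) : IsAntiReflectiveAt (symConv u l f) c R := by
  intro t ht
  rw [hf.symConv_sub_add_symConv ht, hmass, (hf.mono le_add_self).symConv_self hmass, mul_one]

lemma symConv_symConv {v w : ℕ → ℝ} (hv : ∀ k, l < k → v k = 0)
    (hw : ∀ m : ℤ, w m.natAbs = symConv v l (fun s => v s.natAbs) m) (f : ℤ → ℝ)
    (t : ℤ) :
    symConv v l (symConv v l f) t = symConv w (2 * l) f t := by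
  have hshift (a : ℤ) (ha : a ∈ Icc (-(l : ℤ)) l) :
      symConv v l f (t - a) = ∑ m ∈ Icc (-((2 * l : ℕ) : ℤ)) (2 * l : ℕ),
        v (m - a).natAbs * f (t - m) := by
    rw [mem_Icc] at ha
    rw [symConv_eq_sum_of_subset hv (S := Icc (-((2 * l : ℕ) : ℤ) - a) ((2 * l : ℕ) - a))
      (Icc_subset_Icc (by omega) (by omega)),
      ← sum_Icc_shift (fun m => v (m - a).natAbs * f (t - m)) (a := -((2 * l : ℕ) : ℤ) - a)
        (b := (2 * l : ℕ) - a) (c := a) (by ring) (by ring)]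
    refine sum_congr rfl fun m _ => ?_
    rw [add_sub_cancel_right, sub_sub, add_comm a]
  simp only [symConv, hw, sum_mul]
  rw [sum_comm]
  refine sum_congr rfl fun a ha => ?_
  rw [← symConv, hshift a ha, mul_sum]
  exact sum_congr rfl fun m _ => by ring

end SymConv

section Autoconvolution

variable {v w : ℕ → ℝ} {l : ℕ}

lemma natAbs_eq_symConv_of_eq_tsum (hv : ∀ k, l < k → v k = 0)
    (hw : ∀ j : ℕ, w j = ∑' k : ℤ, v k.natAbs * v ((j : ℤ) - k).natAbs) (m : ℤ) :
    w m.natAbs = symConv v l (fun s => v s.natAbs) m := by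
  have hnat : w m.natAbs = symConv v l (fun s => v s.natAbs) m.natAbs := by
    rw [hw, symConv]
    refine tsum_eq_sum fun k hk => ?_
    rw [hv _ (by simp only [mem_Icc] at hk; omega), zero_mul]
  rcases Int.natAbs_eq m with h | h
  · rwa [← h] at hnat
  · rw [hnat, h, symConv_neg_of_even (fun s => by rw [Int.natAbs_neg]), Int.natAbs_neg,
      Int.natAbs_natCast]

lemma eq_zero_of_eq_symConv (hv : ∀ k, l < k → v k = 0)
    (hw : ∀ m : ℤ, w m.natAbs = symConv v l (fun s => v s.natAbs) m) (k : ℕ)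
    (hk : 2 * l < k) :
    w k = 0 := by
  rw [← Int.natAbs_natCast k, hw, symConv]
  refine sum_eq_zero fun a ha => ?_
  rw [mem_Icc] at ha
  rw [hv (k - a).natAbs (by omega), mul_zero]

lemma sum_natAbs_eq_one_of_eq_symConv (hv : ∀ k, l < k → v k = 0)
    (hmass : ∑ k ∈ Icc (-(l : ℤ)) l, v k.natAbs = 1)
    (hw : ∀ m : ℤ, w m.natAbs = symConv v l (fun s => v s.natAbs) m) :
    ∑ k ∈ Icc (-((2 * l : ℕ) : ℤ)) (2 * l : ℕ), w k.natAbs = 1 := by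
  -- Masses multiply: apply `symConv_symConv` to the constant function `1`.
  have hconst : symConv v l (fun _ => 1) = fun _ => 1 :=
    funext fun t => by rw [symConv_const, hmass, mul_one]
  have h := symConv_symConv hv hw (fun _ => 1) 0
  rwa [hconst, hconst, symConv_const, mul_one, eq_comm] at h

end Autoconvolution

-- Only meaningful on `[-(n-1), 2(n-1)]`, where a single reflection lands in `[0, n-1]`.
noncomputable def arExtension (n : ℕ) (x : ℤ → ℝ) (t : ℤ) : ℝ :=
  if t < 0 then 2 * x 0 - x (-t)
  else if (n : ℤ) - 1 < t then 2 * x (n - 1) - x (2 * (n - 1) - t)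
  else x t

section ArExtension

variable {n : ℕ} {x : ℤ → ℝ}

lemma arExtension_of_mem {t : ℤ} (h0 : 0 ≤ t) (h1 : t ≤ n - 1) : arExtension n x t = x t := by
  rw [arExtension, if_neg (not_lt.2 h0), if_neg (not_lt.2 h1)]

lemma isAntiReflectiveAt_arExtension_zero : IsAntiReflectiveAt (arExtension n x) 0 (n - 1) := by
  intro t ht
  obtain rfl | ht0 := eq_or_ne t 0
  · rw [sub_zero, add_zero, two_mul]
  simp only [arExtension]
  split_ifs <;> first | omega | ring_nf

lemma isAntiReflectiveAt_arExtension_last :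
    IsAntiReflectiveAt (arExtension n x) ((n : ℤ) - 1) (n - 1) := by
  intro t ht
  obtain rfl | ht0 := eq_or_ne t 0
  · rw [sub_zero, add_zero, two_mul]
  simp only [arExtension]
  split_ifs <;> first | omega | ring_nf

end ArExtension

section RowFormula

variable {u : ℕ → ℝ} {l n : ℕ} {f : ℤ → ℝ}

lemma IsAntiReflectiveAt.mul_apply_sub {c : ℤ} (hf : IsAntiReflectiveAt f c l)
    (hu : ∀ k, l < k → u k = 0) {s t : ℤ} (hts : t.natAbs ≤ s.natAbs) :
    u s.natAbs * f (c - t) = u s.natAbs * (2 * f c - f (c + t)) := by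
  by_cases hs : s.natAbs ≤ l
  · rw [← hf t (hts.trans hs), add_sub_cancel_right]
  · rw [hu _ (by omega), zero_mul, zero_mul]

lemma sum_Icc_natAbs_eq_sum_Icc (hu : ∀ k, l < k → u k = 0) (a : ℕ) {b : ℤ}
    (hb : (l : ℤ) ≤ b) :
    ∑ p ∈ Icc (a : ℤ) b, u p.natAbs = ∑ k ∈ Icc a l, u k := by
  rw [← sum_subset (Icc_subset_Icc_right hb) fun p hp hp' => hu _ (by
      simp only [mem_Icc] at hp hp'; omega),
    ← sum_Icc_natCast (fun p => u p.natAbs)]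
  simp only [Int.natAbs_natCast]

lemma sum_antiReflectiveMatrix_mul_of_interior (i : Fin n) (hi0 : (i : ℕ) ≠ 0)
    (hi1 : (i : ℕ) ≠ n - 1) :
    ∑ j : Fin n, antiReflectiveMatrix n l u i j * f j
      = (2 * ∑ k ∈ Icc ((i : ℕ) + 1) l, u k + u i) * f 0
        + (2 * ∑ k ∈ Icc (n - i) l, u k + u (n - 1 - i)) * f ((n : ℤ) - 1)
        + ∑ q ∈ Icc (1 : ℤ) (n - 2), (u ((i : ℤ) - q).natAbs - u ((i : ℤ) + q).natAbs
            - u (2 * (n : ℤ) - 2 - i - q).natAbs) * f q := by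
  set c : ℤ → ℝ := fun p =>
    if p = 0 then 2 * ∑ k ∈ Icc ((i : ℕ) + 1) l, u k + u i
    else if p = (n : ℤ) - 1 then 2 * ∑ k ∈ Icc (n - i) l, u k + u (n - 1 - i)
    else u ((i : ℤ) - p).natAbs - u ((i : ℤ) + p).natAbs - u (2 * (n : ℤ) - 2 - i - p).natAbs
    with hc
  have hentry (j : Fin n) : antiReflectiveMatrix n l u i j = c j := by
    have := j.isLt
    simp only [antiReflectiveMatrix, Matrix.of_apply, hi0, hi1, if_false, hc]
    split_ifs <;> first | omega | rfl | skip
    have hsum : (i : ℕ) + j = ((i : ℤ) + j).natAbs := by omega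
    have hrefl : 2 * n - 2 - i - j = (2 * (n : ℤ) - 2 - i - j).natAbs := by omega
    rw [sub_add_eq_sub_sub, hsum, hrefl]
  have hmid : ∀ q ∈ Icc (1 : ℤ) (n - 2), c q * f q = (u ((i : ℤ) - q).natAbs
      - u ((i : ℤ) + q).natAbs - u (2 * (n : ℤ) - 2 - i - q).natAbs) * f q := fun q hq => by
    rw [mem_Icc] at hq
    simp only [hc, if_neg (show q ≠ 0 by omega), if_neg (show q ≠ (n : ℤ) - 1 by omega)]
  have hn : 2 ≤ n := by omega
  rw [sum_congr rfl fun j _ => by rw [hentry], sum_fin_eq_sum_Icc n (fun p => c p * f p),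
    sum_Icc_split _ (b := 0) (by omega) (by omega),
    sum_Icc_split _ (a := 0 + 1) (b := (n : ℤ) - 2) (by omega) (by omega), Icc_self,
    show (n : ℤ) - 2 + 1 = n - 1 by ring, Icc_self, sum_singleton, sum_singleton]
  rw [zero_add, sum_congr rfl hmid]
  simp only [hc, if_pos, if_neg (show (n : ℤ) - 1 ≠ 0 by omega)]
  ring

lemma IsAntiReflectiveAt.sum_Icc_neg_mul_eq (hf : IsAntiReflectiveAt f 0 l)
    (hu : ∀ k, l < k → u k = 0) (hl : l < n) {i : ℕ} (hi : 1 ≤ i) :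
    ∑ p ∈ Icc (2 - (n : ℤ)) (-1), u ((i : ℤ) - p).natAbs * f p
      = 2 * (∑ k ∈ Icc (i + 1) l, u k) * f 0
        - ∑ q ∈ Icc (1 : ℤ) (n - 2), u ((i : ℤ) + q).natAbs * f q := by
  have htail :
      ∑ q ∈ Icc (1 : ℤ) (n - 2), u ((i : ℤ) + q).natAbs = ∑ k ∈ Icc (i + 1) l, u k := by
    simp only [add_comm (i : ℤ)]
    rw [sum_Icc_shift (fun p => u p.natAbs) (a' := ((i + 1 : ℕ) : ℤ)) (b' := n - 2 + i)
      (by push_cast; ring) rfl]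
    exact sum_Icc_natAbs_eq_sum_Icc hu _ (by omega)
  rw [← sum_Icc_reflect (fun p => u ((i : ℤ) - p).natAbs * f p) (a := 1) (b := n - 2) (c := 0)
    (by ring) (by ring), mul_assoc, ← htail, sum_mul, mul_sum, ← sum_sub_distrib]
  refine sum_congr rfl fun q hq => ?_
  rw [mem_Icc] at hq
  rw [zero_sub, sub_neg_eq_add, ← zero_sub, hf.mul_apply_sub hu (by omega), zero_add]
  ring

lemma IsAntiReflectiveAt.sum_Icc_gt_mul_eq (hf : IsAntiReflectiveAt f ((n : ℤ) - 1) l)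
    (hu : ∀ k, l < k → u k = 0) (hl : l < n) {i : ℕ} (hi : i + 2 ≤ n) :
    ∑ p ∈ Icc (n : ℤ) (2 * n - 3), u ((i : ℤ) - p).natAbs * f p
      = 2 * (∑ k ∈ Icc (n - i) l, u k) * f ((n : ℤ) - 1)
        - ∑ q ∈ Icc (1 : ℤ) (n - 2), u (2 * (n : ℤ) - 2 - i - q).natAbs * f q := by
  have htail : ∑ q ∈ Icc (1 : ℤ) (n - 2), u (2 * (n : ℤ) - 2 - i - q).natAbs
      = ∑ k ∈ Icc (n - i) l, u k := by
    rw [sum_Icc_reflect (fun p => u p.natAbs) (a' := ((n - i : ℕ) : ℤ)) (b' := 2 * n - 3 - i)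
      (by push_cast [Nat.cast_sub (show i ≤ n by omega)]; ring) (by ring)]
    exact sum_Icc_natAbs_eq_sum_Icc hu _ (by omega)
  rw [← sum_Icc_reflect (fun p => u ((i : ℤ) - p).natAbs * f p) (a := 1) (b := n - 2)
    (c := 2 * n - 2) (by ring) (by ring), mul_assoc, ← htail, sum_mul, mul_sum,
    ← sum_sub_distrib]
  refine sum_congr rfl fun q hq => ?_
  rw [mem_Icc] at hq
  have hrefl : 2 * (n : ℤ) - 2 - q = (n - 1) - (q - (n - 1)) := by ring
  have hnat : ((i : ℤ) - (2 * n - 2 - q)).natAbs = (2 * (n : ℤ) - 2 - i - q).natAbs := by omega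
  rw [hnat, hrefl, hf.mul_apply_sub hu (by omega), add_sub_cancel]
  ring

lemma symConv_eq_of_interior (hu : ∀ k, l < k → u k = 0) (hl : l < n)
    (hf0 : IsAntiReflectiveAt f 0 l) (hf1 : IsAntiReflectiveAt f ((n : ℤ) - 1) l)
    {i : ℕ} (hi0 : 1 ≤ i) (hi1 : i + 2 ≤ n) :
    symConv u l f i
      = (2 * ∑ k ∈ Icc (i + 1) l, u k + u i) * f 0
        + (2 * ∑ k ∈ Icc (n - i) l, u k + u (n - 1 - i)) * f ((n : ℤ) - 1)
        + ∑ q ∈ Icc (1 : ℤ) (n - 2), (u ((i : ℤ) - q).natAbs - u ((i : ℤ) + q).natAbs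
            - u (2 * (n : ℤ) - 2 - i - q).natAbs) * f q := by
  have hwindow : symConv u l f i
      = ∑ p ∈ Icc (2 - (n : ℤ)) (2 * n - 3), u ((i : ℤ) - p).natAbs * f p := by
    rw [symConv_eq_sum_of_subset hu (S := Icc ((i : ℤ) - (2 * n - 3)) (i - (2 - n)))
        (Icc_subset_Icc (by omega) (by omega)),
      ← sum_Icc_reflect (fun p => u ((i : ℤ) - p).natAbs * f p) (a := (i : ℤ) - (2 * n - 3))
        (b := i - (2 - n)) (c := i) (by ring) (by ring)]
    simp only [sub_sub_cancel]
  have hsplit : ∑ p ∈ Icc (2 - (n : ℤ)) (2 * n - 3), u ((i : ℤ) - p).natAbs * f p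
      = ∑ p ∈ Icc (2 - (n : ℤ)) (-1), u ((i : ℤ) - p).natAbs * f p + u i * f 0
        + ∑ q ∈ Icc (1 : ℤ) (n - 2), u ((i : ℤ) - q).natAbs * f q
        + u (n - 1 - i) * f ((n : ℤ) - 1)
        + ∑ p ∈ Icc (n : ℤ) (2 * n - 3), u ((i : ℤ) - p).natAbs * f p := by
    rw [sum_Icc_split _ (b := -1) (by omega) (by omega),
      sum_Icc_split _ (a := -1 + 1) (b := 0) (by omega) (by omega),
      sum_Icc_split _ (a := 0 + 1) (b := n - 2) (by omega) (by omega),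
      sum_Icc_split _ (a := n - 2 + 1) (b := n - 2 + 1) (by omega) (by omega),
      show (-1 : ℤ) + 1 = 0 by norm_num, zero_add, show (n : ℤ) - 2 + 1 + 1 = n by ring,
      Icc_self, Icc_self, sum_singleton, sum_singleton, sub_zero, Int.natAbs_natCast,
      show (n : ℤ) - 2 + 1 = n - 1 by ring,
      show ((i : ℤ) - (n - 1)).natAbs = n - 1 - i by omega]
    ring
  rw [hwindow, hsplit, hf0.sum_Icc_neg_mul_eq hu hl hi0,
    hf1.sum_Icc_gt_mul_eq hu hl hi1]
  simp only [sub_mul, sum_sub_distrib]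
  ring

lemma sum_antiReflectiveMatrix_mul_eq_symConv (hu : ∀ k, l < k → u k = 0)
    (hmass : ∑ k ∈ Icc (-(l : ℤ)) l, u k.natAbs = 1) (hl : l < n)
    (hf0 : IsAntiReflectiveAt f 0 l) (hf1 : IsAntiReflectiveAt f ((n : ℤ) - 1) l) (i : Fin n) :
    ∑ j : Fin n, antiReflectiveMatrix n l u i j * f j = symConv u l f i := by
  have hcorner : 2 * ∑ k ∈ Icc 1 l, u k + u 0 = 1 := by
    rw [← hmass, sum_Icc_neg_natAbs]; ring
  by_cases hi0 : (i : ℕ) = 0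
  · have hrow (j : Fin n) :
        antiReflectiveMatrix n l u i j = if j = ⟨0, by omega⟩ then 1 else 0 := by
      simp only [antiReflectiveMatrix, Matrix.of_apply, if_pos hi0, hcorner, Fin.ext_iff]
    simp only [hrow, ite_mul, one_mul, zero_mul, sum_ite_eq', mem_univ, if_true, hi0,
      Nat.cast_zero, hf0.symConv_self hmass]
  by_cases hi1 : (i : ℕ) = n - 1
  · have hrow (j : Fin n) :
        antiReflectiveMatrix n l u i j = if j = ⟨n - 1, by omega⟩ then 1 else 0 := by
      simp only [antiReflectiveMatrix, Matrix.of_apply, if_neg hi0, if_pos hi1, hcorner,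
        Fin.ext_iff]
    simp only [hrow, ite_mul, one_mul, zero_mul, sum_ite_eq', mem_univ, if_true, hi1,
      Nat.cast_sub (show 1 ≤ n by omega), Nat.cast_one, hf1.symConv_self hmass]
  rw [sum_antiReflectiveMatrix_mul_of_interior i hi0 hi1,
    symConv_eq_of_interior hu hl hf0 hf1 (by omega) (by omega)]

lemma antiReflectiveMatrix_apply_eq_symConv (hu : ∀ k, l < k → u k = 0)
    (hmass : ∑ k ∈ Icc (-(l : ℤ)) l, u k.natAbs = 1) (hl : l < n) (i j : Fin n) :
    antiReflectiveMatrix n l u i j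
      = symConv u l (arExtension n fun p => if p = j then 1 else 0) i := by
  rw [← sum_antiReflectiveMatrix_mul_eq_symConv hu hmass hl
    (isAntiReflectiveAt_arExtension_zero.mono (by omega))
    (isAntiReflectiveAt_arExtension_last.mono (by omega)), sum_eq_single j]
  · rw [arExtension_of_mem (by omega) (by omega), if_pos rfl, mul_one]
  · intro k _ hk
    rw [arExtension_of_mem (by omega) (by omega), if_neg (by omega), mul_zero]
  · simp

end RowFormula

theorem stmt_9_general (n l' : ℕ) (v : ℕ → ℝ)
    (hl'n : l' ≤ (n - 1) / 4)
    (hzero : ∀ k, l' < k → v k = 0)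
    (hsum : v 0 + 2 * ∑ j ∈ Finset.Icc 1 l', v j = 1)
    (w : ℕ → ℝ)
    (hw : ∀ j : ℕ, w j = ∑' k : ℤ, v k.natAbs * v ((j : ℤ) - k).natAbs) :
    antiReflectiveMatrix n (2 * l') w
      = antiReflectiveMatrix n l' v * antiReflectiveMatrix n l' v := by
  have hvmass : ∑ k ∈ Icc (-(l' : ℤ)) l', v k.natAbs = 1 := by
    rw [sum_Icc_neg_natAbs]; linarith
  have hconv := natAbs_eq_symConv_of_eq_tsum hzero hw
  have hwzero := eq_zero_of_eq_symConv hzero hconv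
  have hwmass := sum_natAbs_eq_one_of_eq_symConv hzero hvmass hconv
  ext i j
  have hn : 2 * l' < n := by have := i.isLt; omega
  set e := arExtension n fun p => if p = j then 1 else 0
  have he0 : IsAntiReflectiveAt e 0 (l' + l') :=
    isAntiReflectiveAt_arExtension_zero.mono (by omega)
  have he1 : IsAntiReflectiveAt e ((n : ℤ) - 1) (l' + l') :=
    isAntiReflectiveAt_arExtension_last.mono (by omega)
  rw [Matrix.mul_apply, antiReflectiveMatrix_apply_eq_symConv hwzero hwmass hn,
    ← symConv_symConv hzero hconv, ← sum_antiReflectiveMatrix_mul_eq_symConv hzero hvmass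
      (by omega) (he0.symConv hvmass) (he1.symConv hvmass)]
  exact sum_congr rfl fun k _ => by
    rw [antiReflectiveMatrix_apply_eq_symConv hzero hvmass (by omega) k j]

/-- If `w = v ∗ v` is the autoconvolution of a symmetric filter `v`
of length `l' ≤ ⌊(n-1)/4⌋` (filters extended symmetrically to ℤ via `k ↦ v |k|`),
so that `w` is a symmetric filter of length `2l'`, then the Anti-Reflective matrix
built from `w` is the square of the one built from `v`: `W^AR(w) = (V^AR)²`. -/
theorem stmt_9 (n l' : ℕ) (hn : 3 ≤ n) (v : ℕ → ℝ)
    (hl' : 0 < l') (hl'n : l' ≤ (n - 1) / 4)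
    (hpos : ∀ j, j ≤ l' → 0 < v j)
    (hzero : ∀ k, l' < k → v k = 0)
    (hsum : v 0 + 2 * ∑ j ∈ Finset.Icc 1 l', v j = 1)
    (w : ℕ → ℝ)
    (hw : ∀ j : ℕ, w j = ∑' k : ℤ, v k.natAbs * v ((j : ℤ) - k).natAbs) :
    antiReflectiveMatrix n (2 * l') w
      = antiReflectiveMatrix n l' v * antiReflectiveMatrix n l' v :=
  stmt_9_general n l' v hl'n hzero hsum w hw
end

section
/- Let n ≥ 2, let v_0, …, v_{l'} be a symmetric filter of length l' (0 < l' ≤ ⌊(n−1)/4⌋), and let w = v ∗ v be its autoconvolution, a symmetric filter of length l = 2l'. For i = 1,…,n set λ_i^R = w_0 + 2∑_{j=1}^{l} w_j cos(j(i−1)π/n). Then λ_1^R = 1, and 0 ≤ λ_i^R < 1 for every i ∈ {2,…,n}. Consequently every eigenvalue of the Reflective matrix W^R built from w lies in [0,1], and 1 is an eigenvalue of W^R. -/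
open Finset Real


/-- reindexing a symmetric integer interval by negation -/
lemma stmt11_sum_neg (L : ℕ) (F : ℤ → ℝ) :
    ∑ k ∈ Icc (-(L:ℤ)) L, F (-k) = ∑ k ∈ Icc (-(L:ℤ)) L, F k := by
  refine Finset.sum_nbij' (fun k => -k) (fun k => -k) ?_ ?_ ?_ ?_ ?_ <;>
    simp +contextual [Finset.mem_Icc] <;> omega

lemma stmt11_odd_sum (L : ℕ) (F : ℤ → ℝ) (h : ∀ k, F (-k) = -F k) :
    ∑ k ∈ Icc (-(L:ℤ)) L, F k = 0 := by
  have h1 := stmt11_sum_neg L F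
  simp only [h] at h1
  rw [Finset.sum_neg_distrib] at h1
  linarith

lemma stmt11_even_sum (L : ℕ) (F : ℤ → ℝ) (h : ∀ k, F (-k) = F k) :
    ∑ k ∈ Icc (-(L:ℤ)) L, F k = F 0 + 2 * ∑ j ∈ Icc (1:ℤ) L, F j := by
  have hsplit : Icc (-(L:ℤ)) L = Icc (-(L:ℤ)) (-1) ∪ (Icc (0:ℤ) 0 ∪ Icc (1:ℤ) L) := by
    ext x; simp [Finset.mem_Icc]; omega
  have hd1 : Disjoint (Icc (-(L:ℤ)) (-1)) (Icc (0:ℤ) 0 ∪ Icc (1:ℤ) L) := by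
    simp [Finset.disjoint_left, Finset.mem_Icc]; omega
  have hd2 : Disjoint (Icc (0:ℤ) 0) (Icc (1:ℤ) L) := by
    simp [Finset.disjoint_left, Finset.mem_Icc]
  have hneg : ∑ k ∈ Icc (-(L:ℤ)) (-1), F k = ∑ j ∈ Icc (1:ℤ) L, F j := by
    refine Finset.sum_nbij' (fun k => -k) (fun k => -k) ?_ ?_ ?_ ?_ ?_ <;>
      simp +contextual [Finset.mem_Icc, h] <;> omega
  rw [hsplit, Finset.sum_union hd1, Finset.sum_union hd2, hneg]
  simp; ring

lemma stmt11_int_nat_sum (L : ℕ) (F : ℤ → ℝ) :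
    ∑ j ∈ Icc (1:ℤ) L, F j = ∑ j ∈ Icc 1 L, F (j : ℤ) := by
  refine Finset.sum_nbij' (fun k => k.toNat) (fun k => (k : ℤ)) ?_ ?_ ?_ ?_ ?_
  · intro a ha; simp only [Finset.mem_Icc] at *; beta_reduce; omega
  · intro a ha; simp only [Finset.mem_Icc] at *; beta_reduce; omega
  · intro a ha; simp only [Finset.mem_Icc] at ha; beta_reduce; omega
  · intro a ha; simp only [Finset.mem_Icc] at ha; beta_reduce; omega
  · intro a ha
    simp only [Finset.mem_Icc] at ha
    beta_reduce
    congr 1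
    omega

/-- telescoping cosine sum -/
lemma stmt11_tele (N : ℕ) (γ : ℝ) :
    2 * Real.sin γ * ∑ k ∈ Finset.range N, Real.cos ((2*(k:ℝ)+1)*γ)
      = Real.sin (2*(N:ℝ)*γ) := by
  induction N with
  | zero => simp
  | succ m ih =>
    rw [Finset.sum_range_succ, mul_add, ih]
    push_cast
    have h1 : Real.sin (2*((m:ℝ)+1)*γ) = Real.sin ((2*(m:ℝ)+1)*γ + γ) := by ring_nf
    have h2 : Real.sin (2*(m:ℝ)*γ) = Real.sin ((2*(m:ℝ)+1)*γ - γ) := by ring_nf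
    rw [h1, h2, Real.sin_add, Real.sin_sub]
    ring

lemma stmt11_cos_mul_cos (x y : ℝ) :
    Real.cos x * Real.cos y = (Real.cos (x - y) + Real.cos (x + y)) / 2 := by
  rw [Real.cos_sub, Real.cos_add]; ring

lemma stmt11_cos_lt_one {x : ℝ} (h1 : 0 < x) (h2 : x < 2 * Real.pi) : Real.cos x < 1 := by
  rcases lt_or_eq_of_le (Real.cos_le_one x) with h | h
  · exact h
  · exfalso
    have := (Real.cos_eq_one_iff_of_lt_of_lt (by linarith) h2).1 h
    linarith

lemma stmt11_neg_one_lt_cos : True := trivial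

/-- similar matrices have the same spectrum -/
lemma stmt11_spec_conj {m K : Type*} [Fintype m] [DecidableEq m] [Field K]
    (A U D : Matrix m m K) (hU : IsUnit U) (h : A * U = U * D) :
    spectrum K A = spectrum K D := by
  obtain ⟨uu, rfl⟩ := hU
  have hA : A = (uu : Matrix m m K) * D * ((uu⁻¹ : (Matrix m m K)ˣ) : Matrix m m K) := by
    calc A = A * ((uu : Matrix m m K) * ((uu⁻¹ : (Matrix m m K)ˣ) : Matrix m m K)) := by rw [Units.mul_inv, mul_one]
    _ = (A * (uu : Matrix m m K)) * ((uu⁻¹ : (Matrix m m K)ˣ) : Matrix m m K) := by rw [mul_assoc]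
    _ = (uu : Matrix m m K) * D * ((uu⁻¹ : (Matrix m m K)ˣ) : Matrix m m K) := by rw [h]
  rw [hA, spectrum.units_conjugate]
set_option maxHeartbeats 1600000 in
/-- For `w = v ∗ v` the autoconvolution of a symmetric filter `v`
of length `l' ≤ ⌊(n-1)/4⌋` (a symmetric filter of length `l = 2l'`), the numbers
`λ_i^R = w_0 + 2 ∑_{j=1}^{l} w_j cos(j (i-1) π/n)` satisfy `λ_1^R = 1` and
`0 ≤ λ_i^R < 1` for `i = 2,…,n`; consequently every eigenvalue of the Reflective
matrix `W^R` built from `w` lies in `[0,1]`, and 1 is an eigenvalue of `W^R`.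
(0-based: `i.val = i - 1`.) -/
theorem stmt_11 (n l' : ℕ) (hn : 2 ≤ n) (v : ℕ → ℝ)
    (hl' : 0 < l') (hl'n : l' ≤ (n - 1) / 4)
    (hpos : ∀ j, j ≤ l' → 0 < v j)
    (hzero : ∀ k, l' < k → v k = 0)
    (hsum : v 0 + 2 * ∑ j ∈ Finset.Icc 1 l', v j = 1)
    (w : ℕ → ℝ)
    (hw : ∀ j : ℕ, w j = ∑' k : ℤ, v k.natAbs * v ((j : ℤ) - k).natAbs)
    (lam : Fin n → ℝ)
    (hlam : ∀ i : Fin n, lam i = w 0 + 2 * ∑ j ∈ Finset.Icc 1 (2 * l'),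
      w j * Real.cos ((j : ℝ) * (i.val : ℝ) * Real.pi / (n : ℝ)))
    (W : Matrix (Fin n) (Fin n) ℝ)
    (hW : ∀ i j : Fin n, W i j =
      w ((i.val : ℤ) - (j.val : ℤ)).natAbs
        + (w (i.val + j.val + 1) + w (2 * n - 1 - i.val - j.val))) :
    (∀ i : Fin n, i.val = 0 → lam i = 1) ∧
    (∀ i : Fin n, 1 ≤ i.val → 0 ≤ lam i ∧ lam i < 1) ∧
    (∀ μ : ℂ, μ ∈ spectrum ℂ (W.map (fun x : ℝ => (x : ℂ))) →
      μ.im = 0 ∧ 0 ≤ μ.re ∧ μ.re ≤ 1) ∧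
    (1 : ℝ) ∈ spectrum ℝ W := by
  have hnR : (0:ℝ) < n := by positivity
  have hl4 : 4 * l' ≤ n - 1 := by omega
  have hv : ∀ m : ℕ, 0 ≤ v m := by
    intro m
    rcases le_or_gt m l' with h | h
    · exact (hpos m h).le
    · rw [hzero m h]
  -- finite formula for w
  have hnat : ∀ j : ℕ, w j = ∑ k ∈ Icc (-(l':ℤ)) l', v k.natAbs * v ((j:ℤ) - k).natAbs := by
    intro j
    rw [hw j]
    apply tsum_eq_sum
    intro k hk
    have hk' : l' < k.natAbs := by
      simp only [Finset.mem_Icc] at hk; omega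
    rw [hzero _ hk', zero_mul]
  have hwfin : ∀ j : ℤ, w j.natAbs
      = ∑ k ∈ Icc (-(l':ℤ)) l', v k.natAbs * v (j - k).natAbs := by
    intro j
    rcases le_or_gt 0 j with hj | hj
    · have h1 : ((j.natAbs : ℕ) : ℤ) = j := by omega
      rw [hnat j.natAbs]
      exact Finset.sum_congr rfl fun k _ => by rw [h1]
    · have h2 := stmt11_sum_neg l' (fun k => v k.natAbs * v (j - k).natAbs)
      rw [← h2, hnat j.natAbs]
      refine Finset.sum_congr rfl fun k hk => ?_
      beta_reduce
      congr 2
      · omega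
      · omega
  have hwnn : ∀ j : ℕ, 0 ≤ w j := by
    intro j
    have := hwfin (j : ℤ)
    simp only [Int.natAbs_natCast] at this
    rw [this]
    exact Finset.sum_nonneg fun k _ => mul_nonneg (hv _) (hv _)
  have hwz : ∀ j : ℤ, 2*l' < j.natAbs → w j.natAbs = 0 := by
    intro j hj
    rw [hwfin j]
    refine Finset.sum_eq_zero fun k hk => ?_
    simp only [Finset.mem_Icc] at hk
    rcases le_or_gt k.natAbs l' with h | h
    · rw [hzero ((j-k).natAbs) (by omega), mul_zero]
    · rw [hzero _ h, zero_mul]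
  -- the symbol of v
  set S : ℝ → ℝ := fun θ => ∑ k ∈ Icc (-(l':ℤ)) l', v k.natAbs * Real.cos (k*θ) with hSdef
  have hsinzero : ∀ θ : ℝ, ∑ k ∈ Icc (-(l':ℤ)) l', v k.natAbs * Real.sin (k*θ) = 0 := by
    intro θ
    refine stmt11_odd_sum l' _ fun k => ?_
    rw [Int.natAbs_neg]
    push_cast
    rw [neg_mul, Real.sin_neg]
    ring
  have hsymb : ∀ θ : ℝ, ∑ j ∈ Icc (-(2*l':ℤ)) (2*l'), w j.natAbs * Real.cos (j*θ)
      = S θ ^ 2 := by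
    intro θ
    have key : ∀ k ∈ Icc (-(l':ℤ)) l',
        ∑ j ∈ Icc (-(2*l':ℤ)) (2*l'), v (j - k).natAbs * Real.cos (j*θ)
        = ∑ m ∈ Icc (-(l':ℤ)) l', v m.natAbs * Real.cos (((k+m : ℤ) : ℝ)*θ) := by
      intro k hk
      simp only [Finset.mem_Icc] at hk
      rw [← Finset.sum_subset (Finset.Icc_subset_Icc (by omega) (by omega) :
            Icc (k-(l':ℤ)) (k+l') ⊆ Icc (-(2*l':ℤ)) (2*l'))
          (fun j hj hj' => by
            have : l' < (j - k).natAbs := by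
              simp only [Finset.mem_Icc] at hj hj'; omega
            rw [hzero _ this, zero_mul])]
      have hmap : Icc (k-(l':ℤ)) (k+l') = (Icc (-(l':ℤ)) l').map (addLeftEmbedding k) := by
        rw [Finset.map_add_left_Icc, sub_eq_add_neg]
      rw [hmap, Finset.sum_map]
      refine Finset.sum_congr rfl fun m hm => ?_
      have h1 : addLeftEmbedding k m = k + m := rfl
      rw [h1, add_sub_cancel_left]
    calc ∑ j ∈ Icc (-(2*l':ℤ)) (2*l'), w j.natAbs * Real.cos (j*θ)
        = ∑ j ∈ Icc (-(2*l':ℤ)) (2*l'), ∑ k ∈ Icc (-(l':ℤ)) l',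
            v k.natAbs * v (j-k).natAbs * Real.cos (j*θ) := by
          exact Finset.sum_congr rfl fun j _ => by rw [hwfin j, Finset.sum_mul]
      _ = ∑ k ∈ Icc (-(l':ℤ)) l', v k.natAbs * ∑ j ∈ Icc (-(2*l':ℤ)) (2*l'),
            v (j-k).natAbs * Real.cos (j*θ) := by
          rw [Finset.sum_comm]
          refine Finset.sum_congr rfl fun k _ => ?_
          rw [Finset.mul_sum]
          refine Finset.sum_congr rfl fun j _ => ?_
          ring
      _ = ∑ k ∈ Icc (-(l':ℤ)) l', ∑ m ∈ Icc (-(l':ℤ)) l',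
            v k.natAbs * (v m.natAbs * Real.cos (((k+m : ℤ) : ℝ)*θ)) := by
          refine Finset.sum_congr rfl fun k hk => ?_
          rw [key k hk, Finset.mul_sum]
      _ = (∑ k ∈ Icc (-(l':ℤ)) l', v k.natAbs * Real.cos (k*θ))
            * (∑ m ∈ Icc (-(l':ℤ)) l', v m.natAbs * Real.cos (m*θ))
          - (∑ k ∈ Icc (-(l':ℤ)) l', v k.natAbs * Real.sin (k*θ))
            * (∑ m ∈ Icc (-(l':ℤ)) l', v m.natAbs * Real.sin (m*θ)) := by
          rw [Finset.sum_mul_sum, Finset.sum_mul_sum, ← Finset.sum_sub_distrib]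
          refine Finset.sum_congr rfl fun k _ => ?_
          rw [← Finset.sum_sub_distrib]
          refine Finset.sum_congr rfl fun m _ => ?_
          have : ((k+m : ℤ) : ℝ) * θ = k*θ + m*θ := by push_cast; ring
          rw [this, Real.cos_add]
          ring
      _ = S θ ^ 2 := by
          rw [hsinzero θ, hSdef]
          ring
  have hlam' : ∀ t : Fin n, lam t
      = ∑ j ∈ Icc (-(2*l':ℤ)) (2*l'), w j.natAbs * Real.cos (j * ((t.val:ℝ) * π / n)) := by
    intro t
    have heven : ∀ j : ℤ, w (-j).natAbs * Real.cos (((-j : ℤ):ℝ) * ((t.val:ℝ) * π / n))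
        = w j.natAbs * Real.cos (j * ((t.val:ℝ) * π / n)) := by
      intro j
      rw [Int.natAbs_neg]
      push_cast
      rw [neg_mul, Real.cos_neg]
    have h1 := stmt11_even_sum (2*l') (fun j => w j.natAbs * Real.cos (j * ((t.val:ℝ) * π / n)))
      heven
    have hIc : Icc (-(((2*l' : ℕ)):ℤ)) ((2*l' : ℕ):ℤ) = Icc (-(2*(l':ℤ))) (2*(l':ℤ)) := by
      norm_num
    rw [hIc] at h1
    rw [h1, stmt11_int_nat_sum, hlam t]
    congr 1
    · norm_num
    · congr 1
      refine Finset.sum_congr rfl fun j hj => ?_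
      simp only [Int.natAbs_natCast, Int.cast_natCast]
      congr 1
      ring
  -- total mass of v
  have hmass : ∑ k ∈ Icc (-(l':ℤ)) l', v k.natAbs = 1 := by
    have h1 := stmt11_even_sum l' (fun k => v k.natAbs) (fun k => by beta_reduce; rw [Int.natAbs_neg])
    rw [h1, stmt11_int_nat_sum]
    simpa using hsum
  have hS1 : ∀ θ : ℝ, S θ = ∑ k ∈ Icc (-(l':ℤ)) l', v k.natAbs * Real.cos (k*θ) := fun θ => rfl
  -- part 1
  have part1 : ∀ i : Fin n, i.val = 0 → lam i = 1 := by
    intro i hi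
    have h0 := hsymb 0
    have hS0 : S 0 = 1 := by
      rw [hS1]
      rw [← hmass]
      refine Finset.sum_congr rfl fun k _ => ?_
      rw [mul_zero, Real.cos_zero, mul_one]
    have hθ : (i.val : ℝ) * π / n = 0 := by rw [hi]; simp
    rw [hlam' i, hθ]
    simpa [hS0] using h0
  have part2 : ∀ i : Fin n, 1 ≤ i.val → 0 ≤ lam i ∧ lam i < 1 := by
    intro i hi
    set θ : ℝ := (i.val : ℝ) * π / n with hθdef
    have hlam2 : lam i = S θ ^ 2 := by rw [hlam' i, hsymb θ]
    have hθpos : 0 < θ := by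
      have : (1:ℝ) ≤ (i.val:ℝ) := by exact_mod_cast hi
      have := Real.pi_pos
      rw [hθdef]
      positivity
    have hθlt : θ < π := by
      have h1 : (i.val:ℝ) < n := by exact_mod_cast i.isLt
      rw [hθdef, div_lt_iff₀ hnR]
      nlinarith [Real.pi_pos]
    have hcos1 : Real.cos (((1:ℤ):ℝ)*θ) < 1 := by
      rw [Int.cast_one, one_mul]
      exact stmt11_cos_lt_one hθpos (by nlinarith [Real.pi_pos])
    have habs : ∀ k : ℤ, k ∈ Icc (-(l':ℤ)) l' → v k.natAbs * Real.cos (k*θ) ≤ v k.natAbs :=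
      fun k _ => mul_le_of_le_one_right (hv _) (Real.cos_le_one _)
    have hup : S θ < 1 := by
      rw [hS1, ← hmass]
      refine Finset.sum_lt_sum habs ⟨1, ?_, ?_⟩
      · simp only [Finset.mem_Icc]; omega
      · have h1 : (0:ℝ) < v (1:ℤ).natAbs := hpos 1 hl'
        nlinarith
    have hlo : -1 < S θ := by
      have h2 : ∑ k ∈ Icc (-(l':ℤ)) l', -(v k.natAbs * Real.cos (k*θ)) < 1 := by
        rw [← hmass]
        refine Finset.sum_lt_sum (fun k _ => by
          nlinarith [Real.neg_one_le_cos ((k:ℝ)*θ), hv k.natAbs]) ⟨0, ?_, ?_⟩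
        · simp only [Finset.mem_Icc]; omega
        · have h1 : (0:ℝ) < v (0:ℤ).natAbs := hpos 0 (by omega)
          simp only [Int.cast_zero, zero_mul, Real.cos_zero, mul_one, Int.natAbs_zero]
          simp only [Int.natAbs_zero] at h1
          linarith
      rw [Finset.sum_neg_distrib] at h2
      rw [hS1]
      linarith
    constructor
    · rw [hlam2]; positivity
    · rw [hlam2]
      nlinarith
  have partLe : ∀ i : Fin n, 0 ≤ lam i ∧ lam i ≤ 1 := by
    intro i
    rcases Nat.eq_zero_or_pos i.val with h | h
    · rw [part1 i h]; norm_num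
    · obtain ⟨h1, h2⟩ := part2 i h; exact ⟨h1, h2.le⟩
  -- eigenvectors
  set f : Fin n → ℤ → ℝ := fun t m => Real.cos ((2*(m:ℝ)+1) * t.val * π / (2*n)) with hfdef
  have hf1 : ∀ (t : Fin n) (m : ℤ), f t (-1-m) = f t m := by
    intro t m
    simp only [hfdef]
    push_cast
    rw [show (2*(-1-(m:ℝ))+1)*(t.val:ℝ)*π/(2*n) = -((2*(m:ℝ)+1)*(t.val:ℝ)*π/(2*n)) by ring,
      Real.cos_neg]
  have hf2 : ∀ (t : Fin n) (m : ℤ), f t (2*(n:ℤ)-1-m) = f t m := by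
    intro t m
    simp only [hfdef]
    push_cast
    have harg : (2*(2*(n:ℝ)-1-(m:ℝ))+1)*(t.val:ℝ)*π/(2*n)
        = (((t.val:ℤ)):ℝ)*(2*π) - (2*(m:ℝ)+1)*(t.val:ℝ)*π/(2*n) := by
      push_cast
      field_simp
      ring
    rw [harg, Real.cos_int_mul_two_pi_sub]
  have heig : ∀ t a : Fin n, ∑ b : Fin n, W a b * f t (b:ℤ) = lam t * f t (a:ℤ) := by
    intro t a
    set g : ℤ → ℝ := fun m => w ((a.val:ℤ) - m).natAbs * f t m with hgdef
    have haL : (a.val : ℤ) < n := by exact_mod_cast a.isLt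
    have ha0 : (0:ℤ) ≤ a.val := Int.ofNat_nonneg _
    -- step A : the three parts of the matrix row assemble the sum over [-n, 2n-1]
    have hsplit : Icc (-(n:ℤ)) (2*n-1)
        = Icc (-(n:ℤ)) (-1) ∪ (Icc (0:ℤ) ((n:ℤ)-1) ∪ Icc ((n:ℤ)) (2*n-1)) := by
      ext x; simp only [Finset.mem_Icc, Finset.mem_union]; omega
    have hd1 : Disjoint (Icc (-(n:ℤ)) (-1)) (Icc (0:ℤ) ((n:ℤ)-1) ∪ Icc ((n:ℤ)) (2*n-1)) := by
      simp only [Finset.disjoint_left, Finset.mem_Icc, Finset.mem_union]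
      omega
    have hd2 : Disjoint (Icc (0:ℤ) ((n:ℤ)-1)) (Icc ((n:ℤ)) (2*n-1)) := by
      simp only [Finset.disjoint_left, Finset.mem_Icc]
      omega
    have h2 : ∑ m ∈ Icc (0:ℤ) ((n:ℤ)-1), g m
        = ∑ b : Fin n, w ((a.val:ℤ) - (b.val:ℤ)).natAbs * f t (b:ℤ) := by
      refine Finset.sum_nbij' (fun (m:ℤ) => (⟨min m.toNat (n-1), by omega⟩ : Fin n))
        (fun (b : Fin n) => ((b.val:ℤ))) ?_ ?_ ?_ ?_ ?_
      · intro m hm; exact Finset.mem_univ _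
      · intro b _; simp only [Finset.mem_Icc]; omega
      · intro m hm
        simp only [Finset.mem_Icc] at hm
        simp only []
        omega
      · intro b _
        have hb : b.val < n := b.isLt
        ext
        simp only []
        omega
      · intro m hm
        simp only [Finset.mem_Icc] at hm
        simp only [hgdef]
        congr 2 <;> simp <;> omega
    have h1 : ∑ m ∈ Icc (-(n:ℤ)) (-1), g m
        = ∑ b : Fin n, w (a.val + b.val + 1) * f t (b:ℤ) := by
      refine Finset.sum_nbij' (fun (m:ℤ) => (⟨min (-1-m).toNat (n-1), by omega⟩ : Fin n))
        (fun (b : Fin n) => (-1 - (b.val:ℤ))) ?_ ?_ ?_ ?_ ?_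
      · intro m hm; exact Finset.mem_univ _
      · intro b _
        simp only [Finset.mem_Icc]
        have : (b.val : ℤ) < n := by exact_mod_cast b.isLt
        omega
      · intro m hm
        simp only [Finset.mem_Icc] at hm
        simp only []
        omega
      · intro b _
        have hb : b.val < n := b.isLt
        ext
        simp only []
        omega
      · intro m hm
        simp only [Finset.mem_Icc] at hm
        simp only [hgdef]
        have h4 : f t m = f t ((min (-1-m).toNat (n-1) : ℕ) : ℤ) := by
          rw [← hf1 t (((min (-1-m).toNat (n-1) : ℕ)) : ℤ)]
          congr 1
          omega
        rw [h4]
        congr 2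
        omega
    have h3 : ∑ m ∈ Icc ((n:ℤ)) (2*n-1), g m
        = ∑ b : Fin n, w (2 * n - 1 - a.val - b.val) * f t (b:ℤ) := by
      refine Finset.sum_nbij' (fun (m:ℤ) => (⟨min (2*(n:ℤ)-1-m).toNat (n-1), by omega⟩ : Fin n))
        (fun (b : Fin n) => (2*(n:ℤ) - 1 - (b.val:ℤ))) ?_ ?_ ?_ ?_ ?_
      · intro m hm; exact Finset.mem_univ _
      · intro b _
        simp only [Finset.mem_Icc]
        have : (b.val : ℤ) < n := by exact_mod_cast b.isLt
        omega
      · intro m hm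
        simp only [Finset.mem_Icc] at hm
        simp only []
        omega
      · intro b _
        have hb : b.val < n := b.isLt
        ext
        simp only []
        omega
      · intro m hm
        simp only [Finset.mem_Icc] at hm
        simp only [hgdef]
        have h5 : f t m = f t ((min (2*(n:ℤ)-1-m).toNat (n-1) : ℕ) : ℤ) := by
          rw [← hf2 t (((min (2*(n:ℤ)-1-m).toNat (n-1) : ℕ)) : ℤ)]
          congr 1
          omega
        rw [h5]
        congr 2
        omega
    have stepA : ∑ b : Fin n, W a b * f t (b:ℤ) = ∑ m ∈ Icc (-(n:ℤ)) (2*n-1), g m := by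
      rw [hsplit, Finset.sum_union hd1, Finset.sum_union hd2, h1, h2, h3,
        ← Finset.sum_add_distrib, ← Finset.sum_add_distrib]
      refine Finset.sum_congr rfl fun b _ => ?_
      rw [hW a b]
      ring
    -- step B : restrict to the support of w
    have stepB : ∑ m ∈ Icc (-(n:ℤ)) (2*n-1), g m
        = ∑ m ∈ Icc ((a.val:ℤ)-2*l') ((a.val:ℤ)+2*l'), g m := by
      refine (Finset.sum_subset (Finset.Icc_subset_Icc (by omega) (by omega)) ?_).symm
      intro m hm hm'
      simp only [Finset.mem_Icc] at hm hm'
      have : 2*l' < ((a.val:ℤ) - m).natAbs := by omega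
      simp only [hgdef]
      rw [hwz _ this, zero_mul]
    -- step C : reindex
    have stepC : ∑ m ∈ Icc ((a.val:ℤ)-2*l') ((a.val:ℤ)+2*l'), g m
        = ∑ k ∈ Icc (-(2*l':ℤ)) (2*l'), w k.natAbs * f t ((a.val:ℤ) - k) := by
      refine (Finset.sum_nbij' (fun k => (a.val:ℤ) - k) (fun m => (a.val:ℤ) - m)
        ?_ ?_ ?_ ?_ ?_).symm
      · intro k hk; simp only [Finset.mem_Icc] at hk ⊢; omega
      · intro m hm; simp only [Finset.mem_Icc] at hm ⊢; omega
      · intro k _; beta_reduce; omega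
      · intro m _; beta_reduce; omega
      · intro k hk
        simp only [hgdef]
        beta_reduce
        congr 2
        omega
    -- step D : evaluate via the symbol
    have hD : ∀ k : ℤ, f t ((a.val:ℤ) - k)
        = f t (a.val:ℤ) * Real.cos (k * ((t.val:ℝ)*π/n))
          + Real.sin ((2*(a.val:ℝ)+1)*(t.val:ℝ)*π/(2*n)) * Real.sin (k * ((t.val:ℝ)*π/n)) := by
      intro k
      simp only [hfdef]
      push_cast
      have h2 : (k:ℝ) * ((t.val:ℝ)*π/n) = 2*((k:ℝ)*((t.val:ℝ)*π))/(2*n) := by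
        rw [mul_div_mul_left _ _ (two_ne_zero)]; ring
      have harg : (2*((a.val:ℝ) - k)+1)*(t.val:ℝ)*π/(2*n)
          = (2*(a.val:ℝ)+1)*(t.val:ℝ)*π/(2*n) - (k:ℝ) * ((t.val:ℝ)*π/n) := by
        rw [h2, div_sub_div_same]
        congr 1
        ring
      rw [harg, Real.cos_sub]
    have hwsin : ∑ k ∈ Icc (-(2*l':ℤ)) (2*l'), w k.natAbs * Real.sin (k * ((t.val:ℝ)*π/n))
        = 0 := by
      have h6 := stmt11_odd_sum (2*l') (fun k => w k.natAbs * Real.sin (k * ((t.val:ℝ)*π/n)))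
        (fun k => by
          beta_reduce
          rw [Int.natAbs_neg]
          push_cast
          rw [neg_mul, Real.sin_neg]
          ring)
      have hIc : Icc (-(((2*l' : ℕ)):ℤ)) ((2*l' : ℕ):ℤ) = Icc (-(2*(l':ℤ))) (2*(l':ℤ)) := by
        norm_num
      rw [hIc] at h6
      exact h6
    rw [stepA, stepB, stepC]
    calc ∑ k ∈ Icc (-(2*l':ℤ)) (2*l'), w k.natAbs * f t ((a.val:ℤ) - k)
        = f t (a.val:ℤ) * (∑ k ∈ Icc (-(2*l':ℤ)) (2*l'),
              w k.natAbs * Real.cos (k * ((t.val:ℝ)*π/n)))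
          + Real.sin ((2*(a.val:ℝ)+1)*(t.val:ℝ)*π/(2*n))
            * (∑ k ∈ Icc (-(2*l':ℤ)) (2*l'),
              w k.natAbs * Real.sin (k * ((t.val:ℝ)*π/n))) := by
          rw [Finset.mul_sum, Finset.mul_sum, ← Finset.sum_add_distrib]
          refine Finset.sum_congr rfl fun k _ => ?_
          rw [hD k]
          ring
      _ = lam t * f t (a.val:ℤ) := by
          rw [hwsin, ← hlam' t]
          ring
  set U : Matrix (Fin n) (Fin n) ℝ := Matrix.of (fun b t => f t (b:ℤ)) with hUdef
  have hWU : W * U = U * Matrix.diagonal lam := by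
    ext a t
    rw [Matrix.mul_apply, Matrix.mul_diagonal]
    simp only [hUdef, Matrix.of_apply]
    rw [heig t a, mul_comm]
  have hortho : ∀ s t : Fin n, s ≠ t → ∑ b : Fin n, f s (b:ℤ) * f t (b:ℤ) = 0 := by
    intro s t hst
    have hπ := Real.pi_pos
    have hn0 : (n:ℝ) ≠ 0 := ne_of_gt hnR
    have hsl : (s.val:ℝ) < n := by exact_mod_cast s.isLt
    have htl : (t.val:ℝ) < n := by exact_mod_cast t.isLt
    have hs0 : (0:ℝ) ≤ (s.val:ℝ) := by positivity
    have ht0 : (0:ℝ) ≤ (t.val:ℝ) := by positivity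
    have hvne : s.val ≠ t.val := fun h => hst (Fin.ext h)
    have hne : (s.val:ℝ) ≠ (t.val:ℝ) := by exact_mod_cast hvne
    set c : ℝ := π/(2*n) with hc
    have hcpos : 0 < c := by rw [hc]; positivity
    have hnc : (n:ℝ)*c = π/2 := by rw [hc]; field_simp
    set γm : ℝ := ((s.val:ℝ) - t.val)*c with hγm
    set γp : ℝ := ((s.val:ℝ) + t.val)*c with hγp
    have czero : ∀ γ : ℝ, Real.sin γ ≠ 0 → Real.sin (2*(n:ℝ)*γ) = 0 →
        ∑ k ∈ Finset.range n, Real.cos ((2*(k:ℝ)+1)*γ) = 0 := by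
      intro γ h1 h2
      have h3 := stmt11_tele n γ
      rw [h2] at h3
      rcases mul_eq_zero.mp h3 with h4 | h4
      · rcases mul_eq_zero.mp h4 with h5 | h5
        · norm_num at h5
        · exact absurd h5 h1
      · exact h4
    have hsinm : Real.sin γm ≠ 0 := by
      rcases lt_or_gt_of_ne hne with h | h
      · have h1 : γm < 0 := by rw [hγm]; nlinarith
        have h2 : -π < γm := by rw [hγm]; nlinarith
        exact (Real.sin_neg_of_neg_of_neg_pi_lt h1 h2).ne
      · have h1 : 0 < γm := by rw [hγm]; nlinarith
        have h2 : γm < π := by rw [hγm]; nlinarith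
        exact (Real.sin_pos_of_pos_of_lt_pi h1 h2).ne'
    have hsinp : Real.sin γp ≠ 0 := by
      have hvp : 1 ≤ s.val + t.val := by omega
      have hvp' : (1:ℝ) ≤ (s.val:ℝ) + t.val := by exact_mod_cast hvp
      have h1 : 0 < γp := by rw [hγp]; nlinarith
      have h2 : γp < π := by rw [hγp]; nlinarith
      exact (Real.sin_pos_of_pos_of_lt_pi h1 h2).ne'
    have hzm : Real.sin (2*(n:ℝ)*γm) = 0 := by
      have h1 : 2*(n:ℝ)*γm = (((s.val:ℤ) - t.val : ℤ):ℝ)*π := by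
        push_cast
        rw [hγm, hc]
        field_simp
        try ring
      rw [h1]
      exact Real.sin_int_mul_pi _
    have hzp : Real.sin (2*(n:ℝ)*γp) = 0 := by
      have h1 : 2*(n:ℝ)*γp = (((s.val:ℤ) + t.val : ℤ):ℝ)*π := by
        push_cast
        rw [hγp, hc]
        field_simp
        try ring
      rw [h1]
      exact Real.sin_int_mul_pi _
    have hsum2 : ∑ b : Fin n, f s (b:ℤ) * f t (b:ℤ)
        = (∑ k ∈ Finset.range n, Real.cos ((2*(k:ℝ)+1)*γm)
           + ∑ k ∈ Finset.range n, Real.cos ((2*(k:ℝ)+1)*γp)) / 2 := by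
      rw [← Finset.sum_add_distrib, Finset.sum_div]
      rw [Fin.sum_univ_eq_sum_range (fun k => f s ((k:ℕ):ℤ) * f t ((k:ℕ):ℤ)) n]
      refine Finset.sum_congr rfl fun k hk => ?_
      simp only [hfdef]
      push_cast
      rw [stmt11_cos_mul_cos]
      congr 2
      · rw [hγm, hc]; field_simp
      · rw [hγp, hc]; field_simp
    rw [hsum2, czero γm hsinm hzm, czero γp hsinp hzp]
    norm_num
  have hUU : U.transpose * U = Matrix.diagonal (fun t => ∑ b : Fin n, (f t (b:ℤ))^2) := by
    ext s t
    rw [Matrix.mul_apply]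
    rcases eq_or_ne s t with rfl | hst
    · rw [Matrix.diagonal_apply_eq]
      simp [hUdef, sq]
    · rw [Matrix.diagonal_apply_ne _ hst]
      simpa [hUdef] using hortho s t hst
  have hnupos : ∀ t : Fin n, 0 < ∑ b : Fin n, (f t (b:ℤ))^2 := by
    intro t0
    have hπ := Real.pi_pos
    have hb0 : (0:ℕ) < n := by omega
    set b0 : Fin n := ⟨0, hb0⟩ with hb0def
    have hb0c : ((b0:ℤ):ℝ) = 0 := by simp [hb0def]
    have htl' : (t0.val:ℝ) < n := by exact_mod_cast t0.isLt
    have ht0' : (0:ℝ) ≤ (t0.val:ℝ) := by positivity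
    have hpos0 : 0 < f t0 (b0:ℤ) := by
      simp only [hfdef]
      rw [hb0c]
      apply Real.cos_pos_of_mem_Ioo
      constructor
      · have h1 : 0 ≤ (2*(0:ℝ)+1)*(t0.val:ℝ)*π/(2*n) := by positivity
        linarith
      · show (2*(0:ℝ)+1)*(t0.val:ℝ)*π/(2*n) < π/2
        rw [div_lt_iff₀ (by positivity)]
        nlinarith
    calc (0:ℝ) < (f t0 (b0:ℤ))^2 := by positivity
      _ ≤ ∑ b : Fin n, (f t0 (b:ℤ))^2 :=
          Finset.single_le_sum (f := fun b : Fin n => (f t0 (b:ℤ))^2)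
            (fun b _ => sq_nonneg _) (Finset.mem_univ b0)
  have hdetU : U.det ≠ 0 := by
    intro h0
    have h1 : (U.transpose * U).det = 0 := by rw [Matrix.det_mul, h0, mul_zero]
    rw [hUU, Matrix.det_diagonal] at h1
    exact (Finset.prod_pos (fun t _ => hnupos t)).ne' h1
  have hUunit : IsUnit U := (Matrix.isUnit_iff_isUnit_det U).2 (Ne.isUnit hdetU)
  have hspecR : spectrum ℝ W = Set.range lam := by
    rw [stmt11_spec_conj W U (Matrix.diagonal lam) hUunit hWU, spectrum_diagonal]
  -- complex spectrum
  have hspecC : spectrum ℂ (W.map (fun x : ℝ => (x:ℂ)))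
      = Set.range (fun t => (lam t : ℂ)) := by
    have hmap : ∀ A B : Matrix (Fin n) (Fin n) ℝ,
        (A * B).map (fun x : ℝ => (x:ℂ)) = A.map (fun x => (x:ℂ)) * B.map (fun x => (x:ℂ)) := by
      intro A B
      exact Matrix.map_mul (f := Complex.ofRealHom)
    have hUC : IsUnit (U.map (fun x : ℝ => (x:ℂ))) := by
      rw [Matrix.isUnit_iff_isUnit_det]
      have hdc : (U.map fun x : ℝ => (x:ℂ)).det = ((U.det : ℝ) : ℂ) := by
        rw [show (U.map fun x : ℝ => (x:ℂ)) = Complex.ofRealHom.mapMatrix U from rfl,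
          ← RingHom.map_det]
        rfl
      rw [hdc]
      exact Ne.isUnit (by exact_mod_cast hdetU)
    have hWUC : (W.map (fun x : ℝ => (x:ℂ))) * (U.map (fun x => (x:ℂ)))
        = (U.map (fun x => (x:ℂ))) * Matrix.diagonal (fun t => (lam t : ℂ)) := by
      rw [← hmap, hWU, hmap]
      congr 1
      ext i j
      rcases eq_or_ne i j with rfl | hij
      · simp [Matrix.diagonal_apply_eq]
      · simp [Matrix.map_apply, Matrix.diagonal_apply_ne _ hij]
    rw [stmt11_spec_conj _ _ _ hUC hWUC, spectrum_diagonal]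
  refine ⟨part1, part2, ?_, ?_⟩
  · intro μ hμ
    rw [hspecC] at hμ
    obtain ⟨t, rfl⟩ := hμ
    obtain ⟨h1, h2⟩ := partLe t
    simp [h1, h2]
  · rw [hspecR]
    exact ⟨⟨0, by omega⟩, part1 _ rfl⟩
end
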